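/- arXiv:2208.12520 — 8 statements merged into one kernel-verified Lean document; each statement's English description precedes it below -/
import Mathlib

section
/- Let F : ℝⁿ → Set ℝⁿ be continuous (both upper and lower semicontinuous) with F(x) nonempty, compact, and convex for every x, and let X_o, X_u ⊆ ℝⁿ. If the system ẋ ∈ F(x) is robustly safe with respect to (X_o, X_u), then it is strongly robustly safe with respect to (X_o, X_u). -/
open Metric Set Filter MeasureTheory
open scoped Pointwise RealInnerProductSpace Topology

variable {E : Type*} [NormedAddCommGroup E] [NormedSpace ℝ E]

/-- Admissible solution domains: `[0,T]`, `[0,T)`, or `[0,∞)`. -/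
def SolDomain (D : Set ℝ) : Prop :=
  (∃ T : ℝ, 0 ≤ T ∧ D = Set.Icc 0 T) ∨ (∃ T : ℝ, 0 < T ∧ D = Set.Ico 0 T) ∨ D = Set.Ici 0

/-- `φ` is a (locally absolutely continuous) solution of `ẋ ∈ F x` on `D`,
expressed in integral form: `φ t = φ 0 + ∫₀ᵗ v`, with `v t ∈ F (φ t)` a.e. on `D`. -/
def IsSolutionOn (F : E → Set E) (φ : ℝ → E) (D : Set ℝ) : Prop :=
  SolDomain D ∧ ∃ v : ℝ → E,
    (∀ t ∈ D, MeasureTheory.IntegrableOn v (Set.Icc 0 t)) ∧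
    (∀ t ∈ D, φ t = φ 0 + ∫ s in (0:ℝ)..t, v s) ∧
    (∀ᵐ t ∂(MeasureTheory.volume.restrict D), v t ∈ F (φ t))

/-- Safety: no solution starting in `Xo` ever reaches `Xu`. -/
def Safe (F : E → Set E) (Xo Xu : Set E) : Prop :=
  ∀ (φ : ℝ → E) (D : Set ℝ), IsSolutionOn F φ D → φ 0 ∈ Xo → ∀ t ∈ D, φ t ∉ Xu

/-- Forward invariance of `K`. -/
def ForwardInvariant (F : E → Set E) (K : Set E) : Prop :=
  ∀ (φ : ℝ → E) (D : Set ℝ), IsSolutionOn F φ D → φ 0 ∈ K → ∀ t ∈ D, φ t ∈ K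

/-- Image of a set under a set-valued map: `F(S) = ⋃_{y ∈ S} F(y)`. -/
def svImage (F : E → Set E) (S : Set E) : Set E := ⋃ y ∈ S, F y

/-- Right-hand side of the strongly perturbed system `Σ^s_ε`:
`conv (F (x + ε(x)𝔹)) + ε(x)𝔹`. -/
def strongPert (F : E → Set E) (ε : E → ℝ) (x : E) : Set E :=
  convexHull ℝ (svImage F (Metric.closedBall x (ε x))) + Metric.closedBall (0:E) (ε x)

/-- Right-hand side of the (ordinary) perturbed system `Σ_ε`: `F x + ε(x)𝔹`. -/
def pert (F : E → Set E) (ε : E → ℝ) (x : E) : Set E :=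
  F x + Metric.closedBall (0:E) (ε x)

def RobustlySafe (F : E → Set E) (Xo Xu : Set E) : Prop :=
  ∃ ε : E → ℝ, Continuous ε ∧ (∀ x, 0 < ε x) ∧ Safe (pert F ε) Xo Xu

def StronglyRobustlySafe (F : E → Set E) (Xo Xu : Set E) : Prop :=
  ∃ ε : E → ℝ, Continuous ε ∧ (∀ x, 0 < ε x) ∧ Safe (strongPert F ε) Xo Xu

def UniformlyStronglyRobustlySafe (F : E → Set E) (Xo Xu : Set E) : Prop :=
  ∃ ε : ℝ, 0 < ε ∧ Safe (strongPert F (fun _ => ε)) Xo Xu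

/-- Upper semicontinuity of a set-valued map. -/
def UpperSemicontinuousSV (F : E → Set E) : Prop :=
  ∀ x : E, ∀ U : Set E, IsOpen U → F x ⊆ U → ∀ᶠ y in nhds x, F y ⊆ U

/-- Lower semicontinuity of a set-valued map (sequential form). -/
def LowerSemicontinuousSV (F : E → Set E) : Prop :=
  ∀ x : E, ∀ y ∈ F x, ∀ u : ℕ → E, Filter.Tendsto u Filter.atTop (nhds x) →
    ∃ v : ℕ → E, (∀ i, v i ∈ F (u i)) ∧ Filter.Tendsto v Filter.atTop (nhds y)

lemma myClosedBall_add_subset (a b : ℝ) :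
    Metric.closedBall (0:E) a + Metric.closedBall (0:E) b ⊆ Metric.closedBall (0:E) (a+b) := by
  rintro x ⟨u, hu, v, hv, rfl⟩
  rw [mem_closedBall_zero_iff] at *
  exact (norm_add_le u v).trans (add_le_add hu hv)

lemma mySol_mono {F G : E → Set E} (h : ∀ x, F x ⊆ G x) {φ : ℝ → E} {D : Set ℝ}
    (hs : IsSolutionOn F φ D) : IsSolutionOn G φ D := by
  obtain ⟨hd, v, h1, h2, h3⟩ := hs
  exact ⟨hd, v, h1, h2, h3.mono fun t ht => h _ ht⟩

lemma mySafe_mono {F G : E → Set E} (h : ∀ x, F x ⊆ G x) {Xo Xu : Set E}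
    (hs : Safe G Xo Xu) : Safe F Xo Xu :=
  fun φ D hsol h0 t ht => hs φ D (mySol_mono h hsol) h0 t ht

/-- For a continuous `F` with nonempty compact convex values,
robust safety implies strong robust safety. -/
theorem stmt1 {n : ℕ} (F : EuclideanSpace ℝ (Fin n) → Set (EuclideanSpace ℝ (Fin n)))
    (hFusc : UpperSemicontinuousSV F) (hFlsc : LowerSemicontinuousSV F)
    (hFne : ∀ x, (F x).Nonempty) (hFcpt : ∀ x, IsCompact (F x)) (hFcvx : ∀ x, Convex ℝ (F x))
    (Xo Xu : Set (EuclideanSpace ℝ (Fin n)))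
    (hrs : RobustlySafe F Xo Xu) :
    StronglyRobustlySafe F Xo Xu := by
  classical
  obtain ⟨ε, hεc, hεpos, hsafe⟩ := hrs
  -- lower semicontinuity, uniform form
  have lscU : ∀ x : EuclideanSpace ℝ (Fin n), ∀ η > (0:ℝ), ∀ᶠ y in 𝓝 x,
      F x ⊆ F y + Metric.closedBall (0:EuclideanSpace ℝ (Fin n)) η := by
    intro x η hη
    have claim : ∀ z ∈ F x, ∀ᶠ y in 𝓝 x, ∃ w ∈ F y, dist z w < η/2 := by
      intro z hz
      by_contra hcon
      rw [Filter.not_eventually] at hcon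
      obtain ⟨u, hu, hpu⟩ := Filter.exists_seq_forall_of_frequently hcon
      obtain ⟨v, hv, hvt⟩ := hFlsc x z hz u hu
      have hev : ∀ᶠ i in Filter.atTop, dist z (v i) < η/2 :=
        (Metric.tendsto_nhds.mp hvt (η/2) (by linarith)).mono
          (fun i hi => by rw [dist_comm]; exact hi)
      obtain ⟨i, hi⟩ := hev.exists
      exact hpu i ⟨v i, hv i, hi⟩
    obtain ⟨t, htsub, htcov⟩ := (hFcpt x).elim_nhds_subcover
      (fun z => Metric.ball z (η/2)) (fun z _ => Metric.ball_mem_nhds z (by linarith))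
    have hall : ∀ᶠ y in 𝓝 x, ∀ z ∈ t, ∃ w ∈ F y, dist z w < η/2 :=
      (Filter.eventually_all_finset t).2 (fun z hzt => claim z (htsub z hzt))
    refine hall.mono (fun y hy u hu => ?_)
    obtain ⟨z, hzt, hub⟩ := Set.mem_iUnion₂.1 (htcov hu)
    obtain ⟨w, hw, hdw⟩ := hy z hzt
    refine ⟨w, hw, u - w, ?_, by simp⟩
    rw [mem_closedBall_zero_iff, ← dist_eq_norm]
    have h1 : dist u z < η/2 := Metric.mem_ball.1 hub
    have h2 : dist z w < η/2 := hdw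
    calc dist u w ≤ dist u z + dist z w := dist_triangle u z w
      _ ≤ η := by linarith
  -- upper semicontinuity, uniform form
  have uscU : ∀ x : EuclideanSpace ℝ (Fin n), ∀ η > (0:ℝ), ∀ᶠ y in 𝓝 x,
      F y ⊆ F x + Metric.closedBall (0:EuclideanSpace ℝ (Fin n)) η := by
    intro x η hη
    have hopen : IsOpen (Metric.thickening η (F x)) := Metric.isOpen_thickening
    have hsub : F x ⊆ Metric.thickening η (F x) := Metric.self_subset_thickening hη _
    refine (hFusc x _ hopen hsub).mono (fun y hy => hy.trans ?_)
    intro w hw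
    obtain ⟨z, hz, hd⟩ := Metric.mem_thickening_iff.1 hw
    refine ⟨z, hz, w - z, ?_, by simp⟩
    rw [mem_closedBall_zero_iff, ← dist_eq_norm]
    exact hd.le
  -- combined: uniform two-sided approximation near each point
  have key : ∀ x : EuclideanSpace ℝ (Fin n), ∀ η > (0:ℝ), ∃ ρ > (0:ℝ), ∀ y z : EuclideanSpace ℝ (Fin n), dist y x ≤ ρ → dist z x ≤ ρ →
      F z ⊆ F y + Metric.closedBall (0:EuclideanSpace ℝ (Fin n)) η := by
    intro x η hη
    have hev := (uscU x (η/2) (by linarith)).and (lscU x (η/2) (by linarith))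
    rw [Metric.eventually_nhds_iff] at hev
    obtain ⟨ρ, hρ, hball⟩ := hev
    refine ⟨ρ/2, by linarith, fun y z hy hz => ?_⟩
    have hzc := (hball (show dist z x < ρ by linarith)).1
    have hyc := (hball (show dist y x < ρ by linarith)).2
    refine hzc.trans ?_
    calc F x + Metric.closedBall (0:EuclideanSpace ℝ (Fin n)) (η/2)
        ⊆ (F y + Metric.closedBall (0:EuclideanSpace ℝ (Fin n)) (η/2)) + Metric.closedBall (0:EuclideanSpace ℝ (Fin n)) (η/2) :=
          Set.add_subset_add_right hyc
      _ = F y + (Metric.closedBall (0:EuclideanSpace ℝ (Fin n)) (η/2) + Metric.closedBall (0:EuclideanSpace ℝ (Fin n)) (η/2)) := add_assoc _ _ _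
      _ ⊆ F y + Metric.closedBall (0:EuclideanSpace ℝ (Fin n)) η := Set.add_subset_add_left
          ((myClosedBall_add_subset _ _).trans (Metric.closedBall_subset_closedBall (by linarith)))
  -- the admissibility predicate
  set P : EuclideanSpace ℝ (Fin n) → ℝ → Prop := fun x δ => ∀ y : EuclideanSpace ℝ (Fin n), dist y x ≤ δ →
    convexHull ℝ (svImage F (Metric.closedBall y δ)) + Metric.closedBall (0:EuclideanSpace ℝ (Fin n)) δ ⊆
      F y + Metric.closedBall (0:EuclideanSpace ℝ (Fin n)) (ε y) with hP
  set A : EuclideanSpace ℝ (Fin n) → Set ℝ := fun x => {δ | 0 < δ ∧ δ ≤ 1 ∧ P x δ} with hAdef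
  -- A x is nonempty
  have hA : ∀ x : EuclideanSpace ℝ (Fin n), ∃ δ, δ ∈ A x := by
    intro x
    obtain ⟨ρ, hρ, hkey⟩ := key x (ε x / 4) (by linarith [hεpos x])
    have hopen : {y : EuclideanSpace ℝ (Fin n) | ε x / 2 < ε y} ∈ 𝓝 x := by
      have : IsOpen {y : EuclideanSpace ℝ (Fin n) | ε x / 2 < ε y} := isOpen_lt continuous_const hεc
      exact this.mem_nhds (by simp only [Set.mem_setOf_eq]; linarith [hεpos x])
    rw [Metric.mem_nhds_iff] at hopen
    obtain ⟨ρ₂, hρ₂, hb₂⟩ := hopen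
    refine ⟨min 1 (min (ρ/2) (min (ρ₂/2) (ε x / 8))), ?_, min_le_left _ _, ?_⟩
    · exact lt_min one_pos (lt_min (by linarith) (lt_min (by linarith) (by linarith [hεpos x])))
    · set δ := min 1 (min (ρ/2) (min (ρ₂/2) (ε x / 8))) with hδdef
      have hδρ : δ ≤ ρ/2 := (min_le_right _ _).trans (min_le_left _ _)
      have hδρ₂ : δ ≤ ρ₂/2 := (min_le_right _ _).trans ((min_le_right _ _).trans (min_le_left _ _))
      have hδε : δ ≤ ε x / 8 := (min_le_right _ _).trans ((min_le_right _ _).trans (min_le_right _ _))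
      intro y hyx
      have hεy : ε x / 2 < ε y := hb₂ (show y ∈ Metric.ball x ρ₂ by
        rw [Metric.mem_ball]; linarith)
      have sv_sub : svImage F (Metric.closedBall y δ) ⊆
          F y + Metric.closedBall (0:EuclideanSpace ℝ (Fin n)) (ε x / 4) := by
        intro w hw
        obtain ⟨z, hz, hwz⟩ := Set.mem_iUnion₂.1 hw
        have hzy : dist z y ≤ δ := Metric.mem_closedBall.1 hz
        have hzx : dist z x ≤ ρ := by
          calc dist z x ≤ dist z y + dist y x := dist_triangle z y x
            _ ≤ ρ := by linarith
        exact hkey y z (by linarith) hzx hwz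
      have conv_sub : convexHull ℝ (svImage F (Metric.closedBall y δ)) ⊆
          F y + Metric.closedBall (0:EuclideanSpace ℝ (Fin n)) (ε x / 4) :=
        convexHull_min sv_sub ((hFcvx y).add (convex_closedBall _ _))
      calc convexHull ℝ (svImage F (Metric.closedBall y δ)) + Metric.closedBall (0:EuclideanSpace ℝ (Fin n)) δ
          ⊆ (F y + Metric.closedBall (0:EuclideanSpace ℝ (Fin n)) (ε x / 4)) + Metric.closedBall (0:EuclideanSpace ℝ (Fin n)) δ :=
            Set.add_subset_add_right conv_sub
        _ = F y + (Metric.closedBall (0:EuclideanSpace ℝ (Fin n)) (ε x / 4) + Metric.closedBall (0:EuclideanSpace ℝ (Fin n)) δ) :=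
            add_assoc _ _ _
        _ ⊆ F y + Metric.closedBall (0:EuclideanSpace ℝ (Fin n)) (ε y) := Set.add_subset_add_left
            ((myClosedBall_add_subset _ _).trans
              (Metric.closedBall_subset_closedBall (by linarith [hεpos x])))
  -- transfer of admissibility to nearby points
  have htrans : ∀ (x : EuclideanSpace ℝ (Fin n)) (δ : ℝ) (x' : EuclideanSpace ℝ (Fin n)) (δ' : ℝ), δ ∈ A x → 0 < δ' → δ' ≤ δ →
      dist x' x ≤ δ - δ' → δ' ∈ A x' := by
    rintro x δ x' δ' ⟨hδ0, hδ1, hPx⟩ h0 hle hd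
    refine ⟨h0, hle.trans hδ1, fun y hy => ?_⟩
    have hyx : dist y x ≤ δ := by
      calc dist y x ≤ dist y x' + dist x' x := dist_triangle y x' x
        _ ≤ δ := by linarith
    refine Set.Subset.trans ?_ (hPx y hyx)
    exact Set.add_subset_add
      (convexHull_mono (Set.biUnion_subset_biUnion_left (Metric.closedBall_subset_closedBall hle)))
      (Metric.closedBall_subset_closedBall hle)
  set q : EuclideanSpace ℝ (Fin n) → ℝ := fun x => sSup (A x) with hq
  have hAbdd : ∀ x : EuclideanSpace ℝ (Fin n), BddAbove (A x) := fun x => ⟨1, fun δ hδ => hδ.2.1⟩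
  have hqpos : ∀ x : EuclideanSpace ℝ (Fin n), 0 < q x := by
    intro x
    obtain ⟨δ, hδ⟩ := hA x
    exact lt_of_lt_of_le hδ.1 (le_csSup (hAbdd x) hδ)
  have hqub : ∀ x x' : EuclideanSpace ℝ (Fin n), q x ≤ dist x x' + q x' := by
    intro x x'
    obtain ⟨δ₀, hδ₀⟩ := hA x
    refine csSup_le ⟨δ₀, hδ₀⟩ ?_
    intro δ hδ
    rcases le_or_gt δ (dist x x') with h | h
    · linarith [(hqpos x')]
    · have hmem : δ - dist x x' ∈ A x' := htrans x δ x' _ hδ (by linarith)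
        (by have h0 : (0:ℝ) ≤ dist x x' := dist_nonneg; linarith)
        (by rw [dist_comm]; linarith)
      have := le_csSup (hAbdd x') hmem
      linarith
  have hqlip : LipschitzWith 1 q := by
    refine LipschitzWith.of_dist_le_mul (fun x y => ?_)
    rw [Real.dist_eq, NNReal.coe_one, one_mul, abs_sub_le_iff]
    constructor
    · have := hqub x y; linarith
    · have := hqub y x; rw [dist_comm y x] at this; linarith
  set ε' : EuclideanSpace ℝ (Fin n) → ℝ := fun x => q x / 2 with hε'
  have hsub : ∀ y : EuclideanSpace ℝ (Fin n), strongPert F ε' y ⊆ pert F ε y := by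
    intro y
    obtain ⟨δ₀, hδ₀⟩ := hA y
    obtain ⟨δ, hδA, hδgt⟩ := exists_lt_of_lt_csSup ⟨δ₀, hδ₀⟩
      (show q y / 2 < q y by linarith [hqpos y])
    have hPy := hδA.2.2 y (by simp [dist_self]; exact hδA.1.le)
    refine Set.Subset.trans ?_ hPy
    exact Set.add_subset_add
      (convexHull_mono
        (Set.biUnion_subset_biUnion_left (Metric.closedBall_subset_closedBall hδgt.le)))
      (Metric.closedBall_subset_closedBall hδgt.le)
  exact ⟨ε', (hqlip.continuous).div_const 2, fun x => half_pos (hqpos x), mySafe_mono hsub hsafe⟩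
end

section
/- Let F : ℝⁿ → Set ℝⁿ be upper semicontinuous with F(x) nonempty, compact, and convex for every x, let X_o, X_u ⊆ ℝⁿ, and let B : ℝⁿ → ℝ be a continuously differentiable barrier function candidate with respect to (X_o, X_u) with zero-sublevel set K. If ⟨∇B(x), η⟩ < 0 for every x ∈ ∂K and every η ∈ F(x), then the system ẋ ∈ F(x) is strongly robustly safe with respect to (X_o, X_u). -/
open Metric Set Filter MeasureTheory
open scoped Pointwise RealInnerProductSpace Topology

variable {E : Type*} [NormedAddCommGroup E] [NormedSpace ℝ E]

/-!
Upper semicontinuity and compactness of `F`, together with continuity of `∇B`, give by the tube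
lemma around every point `y` a radius `r` such that every velocity of `F` within `r` of `y` points
strictly into `K` at every boundary point within `r` of `y`, with a margin of order `r`. These radii
glue, by a partition of unity, into a continuous `ε`, and the margin makes all velocities of `Σ^s_ε`
near a boundary point `x` lie in a cone `{η | ⟪∇B x, η⟫ ≤ -c‖η‖}`. A solution leaving `K` would,
right after its last time `t₀` in `K`, have moved by an integral of such velocities, hence into the
cone, and the first-order expansion of `B` at `φ t₀` then keeps `B ≤ 0`: a contradiction. So `K` is
forward invariant for `Σ^s_ε`; it contains `X_o` and avoids `X_u`.
-/

lemma ContinuousLinearMap.integral_le_neg_mul_norm_integral [CompleteSpace E] {α : Type*}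
    [MeasurableSpace α] {μ : Measure α} {f : α → E} (ℓ : E →L[ℝ] ℝ) {c : ℝ} (hc : 0 ≤ c)
    (hf : Integrable f μ) (hℓ : ∀ᵐ a ∂μ, ℓ (f a) ≤ -c * ‖f a‖) :
    ℓ (∫ a, f a ∂μ) ≤ -c * ‖∫ a, f a ∂μ‖ :=
  calc ℓ (∫ a, f a ∂μ) = ∫ a, ℓ (f a) ∂μ := (ℓ.integral_comp_comm hf).symm
    _ ≤ ∫ a, -c * ‖f a‖ ∂μ := integral_mono_ae (ℓ.integrable_comp hf) (hf.norm.const_mul _) hℓ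
    _ = -c * ∫ a, ‖f a‖ ∂μ := integral_const_mul _ _
    _ ≤ -c * ‖∫ a, f a ∂μ‖ :=
      mul_le_mul_of_nonpos_left (norm_integral_le_integral_norm f) (neg_nonpos.2 hc)

lemma HasFDerivAt.eventually_le_add_mul_norm {f : E → ℝ} {f' : E →L[ℝ] ℝ} {x : E}
    (hf : HasFDerivAt f f' x) {c : ℝ} (hc : 0 < c) :
    ∀ᶠ y in 𝓝 x, f y ≤ f x + f' (y - x) + c * ‖y - x‖ := by
  filter_upwards [hf.isLittleO.def hc] with y hy
  linarith [(le_abs_self _).trans hy]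

lemma ContinuousOn.exists_mem_frontier_forall_notMem {X : Type*} [TopologicalSpace X]
    {φ : ℝ → X} {a b : ℝ} (hφ : ContinuousOn φ (Icc a b)) {K : Set X} (hK : IsClosed K)
    (hab : a ≤ b) (ha : φ a ∈ K) (hb : φ b ∉ K) :
    ∃ t ∈ Ico a b, φ t ∈ frontier K ∧ ∀ s ∈ Ioc t b, φ s ∉ K := by
  have hS : IsCompact (Icc a b ∩ φ ⁻¹' K) :=
    isCompact_Icc.of_isClosed_subset (hφ.preimage_isClosed_of_isClosed isClosed_Icc hK)
      inter_subset_left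
  obtain ⟨t, ⟨htab, htK⟩, hmax⟩ := hS.exists_isGreatest ⟨a, ⟨left_mem_Icc.2 hab, ha⟩⟩
  have hexit : ∀ s ∈ Ioc t b, φ s ∉ K := fun s hs hsK =>
    hs.1.not_ge (hmax ⟨⟨htab.1.trans hs.1.le, hs.2⟩, hsK⟩)
  have htb : t < b := htab.2.lt_of_ne fun h => hb (h ▸ htK)
  refine ⟨t, ⟨htab.1, htb⟩, ⟨subset_closure htK, fun hint => ?_⟩, hexit⟩
  have := left_nhdsWithin_Ioc_neBot htb
  have hφt : Tendsto φ (𝓝[Ioc t b] t) (𝓝 (φ t)) :=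
    (hφ t htab).tendsto.mono_left (nhdsWithin_mono _ fun s hs => ⟨htab.1.trans hs.1.le, hs.2⟩)
  obtain ⟨s, hsK, hs⟩ :=
    ((hφt.eventually (mem_interior_iff_mem_nhds.1 hint)).and eventually_mem_nhdsWithin).exists
  exact hexit s hs hsK

namespace SolDomain

variable {D : Set ℝ}

lemma nonneg (hD : SolDomain D) {t : ℝ} (ht : t ∈ D) : 0 ≤ t := by
  rcases hD with ⟨T, -, rfl⟩ | ⟨T, -, rfl⟩ | rfl
  exacts [ht.1, ht.1, ht]

lemma Icc_subset (hD : SolDomain D) {t : ℝ} (ht : t ∈ D) : Icc 0 t ⊆ D := by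
  rcases hD with ⟨T, -, rfl⟩ | ⟨T, -, rfl⟩ | rfl
  · exact Icc_subset_Icc le_rfl ht.2
  · exact fun s hs => ⟨hs.1, hs.2.trans_lt ht.2⟩
  · exact fun s hs => hs.1

end SolDomain

namespace IsSolutionOn

variable {G : E → Set E} {φ : ℝ → E} {D : Set ℝ}

lemma continuousOn_Icc (hφ : IsSolutionOn G φ D) {t : ℝ} (ht : t ∈ D) :
    ContinuousOn φ (Icc 0 t) := by
  obtain ⟨hD, v, hvint, hφeq, -⟩ := hφ
  have hprim := intervalIntegral.continuousOn_primitive_interval (μ := volume) (a := 0) (b := t)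
    (by rw [uIcc_of_le (hD.nonneg ht)]; exact hvint t ht)
  rw [uIcc_of_le (hD.nonneg ht)] at hprim
  exact (continuousOn_const.add hprim).congr fun s hs => hφeq s (hD.Icc_subset ht hs)

lemma apply_sub_le_neg_mul_norm [CompleteSpace E] (hφ : IsSolutionOn G φ D) {s t : ℝ}
    (hs : 0 ≤ s) (hst : s ≤ t) (ht : t ∈ D) (ℓ : E →L[ℝ] ℝ) {c : ℝ} (hc : 0 ≤ c)
    (hG : ∀ τ ∈ Icc s t, ∀ η ∈ G (φ τ), ℓ η ≤ -c * ‖η‖) :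
    ℓ (φ t - φ s) ≤ -c * ‖φ t - φ s‖ := by
  obtain ⟨hD, v, hvint, hφeq, hvG⟩ := hφ
  have hsD : s ∈ D := hD.Icc_subset ht ⟨hs, hst⟩
  have hv : IntegrableOn v (Ioc s t) :=
    (hvint t ht).mono_set (Ioc_subset_Icc_self.trans (Icc_subset_Icc hs le_rfl))
  have hincr : φ t - φ s = ∫ τ in Ioc s t, v τ := by
    rw [hφeq t ht, hφeq s hsD, add_sub_add_left_eq_sub,
      intervalIntegral.integral_interval_sub_left, intervalIntegral.integral_of_le hst]
    · exact (intervalIntegrable_iff_integrableOn_Icc_of_le (hD.nonneg ht)).2 (hvint t ht)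
    · exact (intervalIntegrable_iff_integrableOn_Icc_of_le hs).2 (hvint s hsD)
  have hvG' : ∀ᵐ τ ∂volume.restrict (Ioc s t), v τ ∈ G (φ τ) :=
    ae_restrict_of_ae_restrict_of_subset
      (Ioc_subset_Icc_self.trans (hD.Icc_subset ht |>.trans' (Icc_subset_Icc hs le_rfl))) hvG
  rw [hincr]
  refine ℓ.integral_le_neg_mul_norm_integral hc hv ?_
  filter_upwards [hvG', ae_restrict_mem measurableSet_Ioc] with τ hτG hτ
  exact hG τ (Ioc_subset_Icc_self hτ) _ hτG

end IsSolutionOn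

lemma forwardInvariant_of_frontier_cone [CompleteSpace E] {G : E → Set E} {B : E → ℝ}
    (hB : Continuous B) (hBd : ∀ x ∈ frontier {y | B y ≤ 0}, DifferentiableAt ℝ B x)
    (hcone : ∀ x ∈ frontier {y | B y ≤ 0},
      ∃ c > 0, ∀ᶠ y in 𝓝 x, ∀ η ∈ G y, fderiv ℝ B x η ≤ -c * ‖η‖) :
    ForwardInvariant G {y | B y ≤ 0} := by
  intro φ D hφ hφ0 t₁ ht₁
  by_contra hφt₁
  have hK : IsClosed {y | B y ≤ 0} := isClosed_le hB continuous_const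
  have hcont := hφ.continuousOn_Icc ht₁
  obtain ⟨t₀, ht₀, hfront, hexit⟩ :=
    hcont.exists_mem_frontier_forall_notMem hK (hφ.1.nonneg ht₁) hφ0 hφt₁
  have hφt₀ : B (φ t₀) ≤ 0 := hK.frontier_subset hfront
  obtain ⟨c, hc, hcone₀⟩ := hcone _ hfront
  have hnear : ∀ᶠ τ in 𝓝[≥] t₀, (∀ η ∈ G (φ τ), fderiv ℝ B (φ t₀) η ≤ -c * ‖η‖) ∧
      B (φ τ) ≤ B (φ t₀) + fderiv ℝ B (φ t₀) (φ τ - φ t₀) + c * ‖φ τ - φ t₀‖ := by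
    have hφ₀ : ContinuousWithinAt φ (Icc t₀ t₁) t₀ :=
      (hcont t₀ (Ico_subset_Icc_self ht₀)).mono (Icc_subset_Icc ht₀.1 le_rfl)
    rw [← nhdsWithin_Icc_eq_nhdsGE ht₀.2]
    exact hφ₀.tendsto.eventually
      (hcone₀.and ((hBd _ hfront).hasFDerivAt.eventually_le_add_mul_norm hc))
  obtain ⟨u, htu, hu⟩ := mem_nhdsGE_iff_exists_Icc_subset.1 hnear
  set s := min u t₁
  have hs : s ∈ Ioc t₀ t₁ := ⟨lt_min htu ht₀.2, min_le_right _ _⟩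
  have hincr := hφ.apply_sub_le_neg_mul_norm ht₀.1 hs.1.le
    (hφ.1.Icc_subset ht₁ ⟨ht₀.1.trans hs.1.le, hs.2⟩) _ hc.le
    fun τ hτ => (hu ⟨hτ.1, hτ.2.trans (min_le_left _ _)⟩).1
  have htaylor := (hu ⟨hs.1.le, min_le_left _ _⟩).2
  exact hexit s hs (show B (φ s) ≤ 0 by linarith)

-- The margin `r * (‖η‖ + ‖g z‖ + r)` is what survives convex combinations and a perturbation of
-- size `r`, see `ContinuousLinearMap.apply_add_le_neg_mul_norm`.
def IsInwardRadius (F : E → Set E) (g : E → E →L[ℝ] ℝ) (Γ : Set E) (y : E) (r : ℝ) : Prop :=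
  ∀ w ∈ closedBall y r, ∀ η ∈ F w, ∀ z ∈ closedBall y r ∩ Γ, g z η + r * (‖η‖ + ‖g z‖ + r) < 0

namespace IsInwardRadius

variable {F : E → Set E} {g : E → E →L[ℝ] ℝ} {Γ : Set E} {y : E} {r : ℝ}

lemma of_closedBall_subset (h : IsInwardRadius F g Γ y r) {y' : E} {r' : ℝ} (hr' : 0 ≤ r')
    (hrr' : r' ≤ r) (hsub : closedBall y' r' ⊆ closedBall y r) : IsInwardRadius F g Γ y' r' := by
  intro w hw η hη z hz
  have := h w (hsub hw) η hη z ⟨hsub hz.1, hz.2⟩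
  have : r' * (‖η‖ + ‖g z‖ + r') ≤ r * (‖η‖ + ‖g z‖ + r) := by gcongr; linarith
  linarith

lemma mono (h : IsInwardRadius F g Γ y r) {r' : ℝ} (hr' : 0 ≤ r') (hrr' : r' ≤ r) :
    IsInwardRadius F g Γ y r' :=
  h.of_closedBall_subset hr' hrr' (closedBall_subset_closedBall hrr')

lemma of_dist_le_half (h : IsInwardRadius F g Γ y r) (hr : 0 ≤ r) {y' : E}
    (hy' : dist y' y ≤ r / 2) : IsInwardRadius F g Γ y' (r / 2) :=
  h.of_closedBall_subset (by linarith) (by linarith) (closedBall_subset_closedBall' (by linarith))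

end IsInwardRadius

lemma exists_isInwardRadius {F : E → Set E} {g : E → E →L[ℝ] ℝ} {Γ : Set E}
    (hF : UpperSemicontinuousSV F) (hFc : ∀ x, IsCompact (F x)) (hg : Continuous g)
    (hΓ : IsClosed Γ) (hin : ∀ z ∈ Γ, ∀ η ∈ F z, g z η < 0) (y : E) :
    ∃ r > 0, IsInwardRadius F g Γ y r := by
  set N : Set ((E × ℝ) × E) :=
    {q | q.1.1 ∈ Γ → g q.1.1 q.2 + q.1.2 * (‖q.2‖ + ‖g q.1.1‖ + q.1.2) < 0}
  have hN : IsOpen N := by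
    simp only [N, imp_iff_not_or, ofPred_or]
    exact (hΓ.isOpen_compl.preimage (by fun_prop)).union (isOpen_lt (by fun_prop) continuous_const)
  have hyN : {(y, 0)} ×ˢ F y ⊆ N := by
    rintro ⟨⟨z, r⟩, η⟩ ⟨hzr, hη⟩ hz
    obtain ⟨rfl, rfl⟩ := Prod.mk.inj hzr
    simpa using hin z hz η hη
  -- tube lemma at `(y, 0)`, treating the radius as a variable: at radius `0`, `N` is just `hin`
  obtain ⟨u, v, hu, hv, hyu, hFv, huv⟩ := generalized_tube_lemma isCompact_singleton (hFc y) hN hyN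
  obtain ⟨δ, hδ, hδu⟩ := Metric.isOpen_iff.1 hu (y, 0) (hyu rfl)
  obtain ⟨δ', hδ', hδ'v⟩ := Metric.eventually_nhds_iff.1 (hF y v hv hFv)
  refine ⟨min δ δ' / 2, by positivity, fun w hw η hη z hz =>
    huv (show ((z, min δ δ' / 2), η) ∈ u ×ˢ v from ⟨hδu ?_, hδ'v ?_ hη⟩) hz.2⟩
  · rw [← ball_prod_same, mem_prod, mem_ball, mem_ball, Real.dist_eq, sub_zero,
      abs_of_pos (by positivity)]
    have := mem_closedBall.1 hz.1
    constructor <;> linarith [min_le_left δ δ']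
  · linarith [mem_closedBall.1 hw, min_le_right δ δ']

lemma exists_continuous_isInwardRadius {F : E → Set E} {g : E → E →L[ℝ] ℝ} {Γ : Set E}
    (hex : ∀ y, ∃ r > 0, IsInwardRadius F g Γ y r) :
    ∃ ε : E → ℝ, Continuous ε ∧ (∀ y, 0 < ε y) ∧ ∀ y, IsInwardRadius F g Γ y (ε y) := by
  have hconv (y : E) : Convex ℝ {r | 0 < r ∧ IsInwardRadius F g Γ y r} :=
    convex_iff_ordConnected.2
      ⟨fun _ ha _ hb _ hr => ⟨ha.1.trans_le hr.1, hb.2.mono (ha.1.le.trans hr.1) hr.2⟩⟩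
  have hloc (y : E) : ∃ c, ∀ᶠ y' in 𝓝 y, c ∈ {r | 0 < r ∧ IsInwardRadius F g Γ y' r} := by
    obtain ⟨r, hr, hy⟩ := hex y
    refine ⟨r / 2, ?_⟩
    filter_upwards [closedBall_mem_nhds y (half_pos hr)] with y' hy'
    exact ⟨half_pos hr, hy.of_dist_le_half hr.le hy'⟩
  obtain ⟨ε, hε⟩ := exists_continuous_forall_mem_convex_of_local_const hconv hloc
  exact ⟨ε, ε.continuous, fun y => (hε y).1, fun y => (hε y).2⟩

lemma ContinuousLinearMap.apply_add_le_neg_mul_norm (ℓ : E →L[ℝ] ℝ) {a b : E} {r : ℝ}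
    (hr : 0 ≤ r) (ha : ℓ a + r * ‖a‖ ≤ -(r * (‖ℓ‖ + r))) (hb : ‖b‖ ≤ r) :
    ℓ (a + b) ≤ -r * ‖a + b‖ := by
  have hℓb : ℓ b ≤ ‖ℓ‖ * r :=
    (le_abs_self _).trans ((ℓ.le_opNorm b).trans (mul_le_mul_of_nonneg_left hb (norm_nonneg ℓ)))
  have hab : r * ‖a + b‖ ≤ r * (‖a‖ + r) :=
    mul_le_mul_of_nonneg_left ((norm_add_le a b).trans (by linarith)) hr
  rw [map_add]
  linarith

lemma eventually_apply_le_neg_mul_norm_strongPert {F : E → Set E} {g : E → E →L[ℝ] ℝ}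
    {Γ : Set E} {ε : E → ℝ} (hε : Continuous ε) (hεpos : ∀ y, 0 < ε y)
    (hεr : ∀ y, IsInwardRadius F g Γ y (ε y)) {x : E} (hx : x ∈ Γ) :
    ∀ᶠ y in 𝓝 x, ∀ η ∈ strongPert F ε y, g x η ≤ -(ε x / 2) * ‖η‖ := by
  have hεx : ∀ᶠ y in 𝓝 x, ε x / 2 < ε y :=
    hε.continuousAt.eventually (lt_mem_nhds (half_lt_self (hεpos x)))
  filter_upwards [hεx, ball_mem_nhds x (half_pos (hεpos x))] with y hεy hy
  rintro _ ⟨a, ha, b, hb, rfl⟩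
  have hxy : x ∈ closedBall y (ε y) ∩ Γ :=
    ⟨mem_closedBall_comm.1 (mem_closedBall.2 (hy.le.trans hεy.le)), hx⟩
  have hconv : ConvexOn ℝ univ fun a => g x a + ε y * ‖a‖ :=
    ((g x).toLinearMap.convexOn convex_univ).add ((convexOn_norm convex_univ).smul (hεpos y).le)
  have hsub : svImage F (closedBall y (ε y)) ⊆
      {a | a ∈ univ ∧ g x a + ε y * ‖a‖ ≤ -(ε y * (‖g x‖ + ε y))} := by
    intro a ha
    obtain ⟨w, hw, ha⟩ := mem_iUnion₂.1 ha
    have := hεr y w hw a ha x hxy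
    exact ⟨mem_univ a, by linarith⟩
  have hab := (g x).apply_add_le_neg_mul_norm (hεpos y).le
    (convexHull_min hsub (hconv.convex_le _) ha).2 (mem_closedBall_zero_iff.1 hb)
  nlinarith [norm_nonneg (a + b)]

theorem stmt2_general {n : ℕ} (F : EuclideanSpace ℝ (Fin n) → Set (EuclideanSpace ℝ (Fin n)))
    (hFusc : UpperSemicontinuousSV F)
    (hFcpt : ∀ x, IsCompact (F x))
    (Xo Xu : Set (EuclideanSpace ℝ (Fin n))) (B : EuclideanSpace ℝ (Fin n) → ℝ)
    (hB : ContDiff ℝ 1 B) (hBu : ∀ x ∈ Xu, 0 < B x) (hBo : ∀ x ∈ Xo, B x ≤ 0)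
    (hgrad : ∀ x ∈ frontier {y | B y ≤ 0}, ∀ η ∈ F x, ⟪gradient B x, η⟫ < 0) :
    StronglyRobustlySafe F Xo Xu := by
  have hin : ∀ x ∈ frontier {y | B y ≤ 0}, ∀ η ∈ F x, fderiv ℝ B x η < 0 := by
    simpa only [inner_gradient_left] using hgrad
  obtain ⟨ε, hεc, hεpos, hεr⟩ := exists_continuous_isInwardRadius
    (exists_isInwardRadius hFusc hFcpt (hB.continuous_fderiv one_ne_zero) isClosed_frontier hin)
  have hinv : ForwardInvariant (strongPert F ε) {y | B y ≤ 0} :=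
    forwardInvariant_of_frontier_cone hB.continuous (fun x _ => hB.differentiable one_ne_zero x)
      fun x hx => ⟨ε x / 2, half_pos (hεpos x),
        eventually_apply_le_neg_mul_norm_strongPert hεc hεpos hεr hx⟩
  exact ⟨ε, hεc, hεpos, fun φ D hφ h0 t ht hXu => (hBu _ hXu).not_ge (hinv φ D hφ (hBo _ h0) t ht)⟩

/-- If `B` is a `C¹` barrier function candidate with `⟨∇B x, η⟩ < 0`
for all `x ∈ ∂K` and `η ∈ F x`, then `ẋ ∈ F x` is strongly robustly safe. -/
theorem stmt2 {n : ℕ} (F : EuclideanSpace ℝ (Fin n) → Set (EuclideanSpace ℝ (Fin n)))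
    (hFusc : UpperSemicontinuousSV F)
    (hFne : ∀ x, (F x).Nonempty) (hFcpt : ∀ x, IsCompact (F x)) (hFcvx : ∀ x, Convex ℝ (F x))
    (Xo Xu : Set (EuclideanSpace ℝ (Fin n))) (B : EuclideanSpace ℝ (Fin n) → ℝ)
    (hB : ContDiff ℝ 1 B) (hBu : ∀ x ∈ Xu, 0 < B x) (hBo : ∀ x ∈ Xo, B x ≤ 0)
    (hgrad : ∀ x ∈ frontier {y | B y ≤ 0}, ∀ η ∈ F x, ⟪gradient B x, η⟫ < 0) :
    StronglyRobustlySafe F Xo Xu :=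
  stmt2_general F hFusc hFcpt Xo Xu B hB hBu hBo hgrad
end

section
/- Let F : ℝⁿ → Set ℝⁿ be upper semicontinuous with F(x) nonempty, compact, and convex for every x, let B : ℝⁿ → ℝ be continuously differentiable, and let D ⊆ ℝⁿ be a nonempty compact set such that ⟨∇B(x), η⟩ < 0 for every x ∈ D and every η ∈ F(x). Then there exists δ > 0 such that for every x ∈ D and every η ∈ conv(F(x + δ𝔹)) + δ𝔹 one has ⟨∇B(x), η⟩ < 0. -/
open Metric Set Filter MeasureTheory
open scoped Pointwise RealInnerProductSpace Topology

variable {E : Type*} [NormedAddCommGroup E] [NormedSpace ℝ E]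

/-! Near `(0, x₀)`, upper semicontinuity puts every `F y` inside a thickening of the convex set
`F x₀`; that thickening is again convex, so the convex hull in `strongPert` stays in a slightly
larger thickening. By the tube lemma, `⟪∇B x, η⟫ < 0` persists on such a thickening for `x` near
`x₀`, and compactness of `D` makes the admissible perturbation size uniform. -/

theorem ContDiff.continuous_gradient {V : Type*} [NormedAddCommGroup V] [InnerProductSpace ℝ V]
    [CompleteSpace V] {B : V → ℝ} (hB : ContDiff ℝ 1 B) : Continuous (gradient B) :=
  (InnerProductSpace.toDual ℝ V).symm.continuous.comp (hB.continuous_fderiv one_ne_zero)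

theorem UpperSemicontinuousSV.eventually_strongPert_subset_thickening {F : E → Set E}
    (hF : UpperSemicontinuousSV F) {x₀ : E} (hcvx : Convex ℝ (F x₀)) {ρ : ℝ} (hρ : 0 < ρ) :
    ∀ᶠ p : ℝ × E in 𝓝 (0, x₀), strongPert F (fun _ => p.1) p.2 ⊆ thickening ρ (F x₀) := by
  obtain ⟨r, hr, hball⟩ := eventually_nhds_iff_ball.1 <|
    hF x₀ _ isOpen_thickening (self_subset_thickening (half_pos hρ) (F x₀))
  filter_upwards [(continuous_fst.tendsto (0, x₀)).eventually
      (eventually_lt_nhds (lt_min (half_pos hr) (half_pos hρ))),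
    (continuous_snd.tendsto (0, x₀)).eventually (ball_mem_nhds x₀ (half_pos hr))]
    with ⟨δ, x⟩ (hδ : δ < min (r / 2) (ρ / 2)) (hx : dist x x₀ < r / 2)
  rintro _ ⟨a, ha, b, hb, rfl⟩
  have hsub : svImage F (closedBall x δ) ⊆ thickening (ρ / 2) (F x₀) :=
    iUnion₂_subset fun y hy => hball y <| by
      have := dist_triangle y x x₀
      simp only [mem_closedBall, mem_ball] at hy ⊢
      linarith [min_le_left (r / 2) (ρ / 2)]
  obtain ⟨z, hz, haz⟩ := mem_thickening_iff.1 (convexHull_min hsub (hcvx.thickening _) ha)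
  refine mem_thickening_iff.2 ⟨z, hz, ?_⟩
  have := dist_triangle (a + b) a z
  simp only [mem_closedBall, dist_zero_right, dist_self_add_left] at hb this
  linarith [min_le_right (r / 2) (ρ / 2)]

theorem UpperSemicontinuousSV.eventually_forall_strongPert_inner_neg {V : Type*}
    [NormedAddCommGroup V] [InnerProductSpace ℝ V] {F : V → Set V}
    (hF : UpperSemicontinuousSV F) {g : V → V} (hg : Continuous g) {x₀ : V}
    (hcpt : IsCompact (F x₀)) (hcvx : Convex ℝ (F x₀)) (hneg : ∀ η ∈ F x₀, ⟪g x₀, η⟫ < 0) :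
    ∀ᶠ p : ℝ × V in 𝓝 (0, x₀), ∀ η ∈ strongPert F (fun _ => p.1) p.2, ⟪g p.2, η⟫ < 0 := by
  have hW : IsOpen {q : V × V | ⟪g q.1, q.2⟫ < 0} :=
    isOpen_lt (by fun_prop) continuous_const
  obtain ⟨u, v, hu, hv, hx₀u, hFv, huv⟩ := generalized_tube_lemma isCompact_singleton hcpt hW
    (by rintro ⟨x, η⟩ ⟨rfl, hη⟩; exact hneg η hη)
  obtain ⟨ρ, hρ, hρv⟩ := hcpt.exists_thickening_subset_open hv hFv
  filter_upwards [hF.eventually_strongPert_subset_thickening hcvx hρ,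
    (continuous_snd.tendsto (0, x₀)).eventually (hu.mem_nhds (singleton_subset_iff.1 hx₀u))]
    with p hp (hpu : p.2 ∈ u) η hη
  exact huv (show (p.2, η) ∈ u ×ˢ v from ⟨hpu, hρv (hp hη)⟩)

theorem stmt3_general {n : ℕ} (F : EuclideanSpace ℝ (Fin n) → Set (EuclideanSpace ℝ (Fin n)))
    (hFusc : UpperSemicontinuousSV F)
    (hFcpt : ∀ x, IsCompact (F x)) (hFcvx : ∀ x, Convex ℝ (F x))
    (B : EuclideanSpace ℝ (Fin n) → ℝ) (hB : ContDiff ℝ 1 B)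
    (D : Set (EuclideanSpace ℝ (Fin n))) (hDc : IsCompact D)
    (hneg : ∀ x ∈ D, ∀ η ∈ F x, ⟪gradient B x, η⟫ < 0) :
    ∃ δ > (0:ℝ), ∀ x ∈ D, ∀ η ∈ strongPert F (fun _ => δ) x, ⟪gradient B x, η⟫ < 0 := by
  have hsmall : ∀ᶠ δ in 𝓝 (0 : ℝ), ∀ x ∈ D, ∀ η ∈ strongPert F (fun _ => δ) x,
      ⟪gradient B x, η⟫ < 0 :=
    hDc.eventually_forall_of_forall_eventually fun x hx =>
      hFusc.eventually_forall_strongPert_inner_neg hB.continuous_gradient (hFcpt x) (hFcvx x)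
        (hneg x hx)
  obtain ⟨δ, hδ, hδpos⟩ := ((hsmall.filter_mono nhdsWithin_le_nhds).and
    (self_mem_nhdsWithin : Ioi (0 : ℝ) ∈ 𝓝[>] 0)).exists
  exact ⟨δ, hδpos, hδ⟩

/-- On a nonempty compact set `D` where `⟨∇B x, η⟩ < 0` for all `η ∈ F x`,
there is `δ > 0` such that `⟨∇B x, η⟩ < 0` also for all `η ∈ conv(F(x + δ𝔹)) + δ𝔹`. -/
theorem stmt3 {n : ℕ} (F : EuclideanSpace ℝ (Fin n) → Set (EuclideanSpace ℝ (Fin n)))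
    (hFusc : UpperSemicontinuousSV F)
    (hFne : ∀ x, (F x).Nonempty) (hFcpt : ∀ x, IsCompact (F x)) (hFcvx : ∀ x, Convex ℝ (F x))
    (B : EuclideanSpace ℝ (Fin n) → ℝ) (hB : ContDiff ℝ 1 B)
    (D : Set (EuclideanSpace ℝ (Fin n))) (hDne : D.Nonempty) (hDc : IsCompact D)
    (hneg : ∀ x ∈ D, ∀ η ∈ F x, ⟪gradient B x, η⟫ < 0) :
    ∃ δ > (0:ℝ), ∀ x ∈ D, ∀ η ∈ strongPert F (fun _ => δ) x, ⟪gradient B x, η⟫ < 0 :=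
  stmt3_general F hFusc hFcpt hFcvx B hB D hDc hneg
end

section
/- Let F : ℝⁿ → Set ℝⁿ be a continuous set-valued map with nonempty compact values. Then there exist continuous functions λ₁ : [0,∞) → [0,∞) with λ₁(0) = 0 and λ₂ : ℝⁿ → [0,∞) such that F(x + δ𝔹) ⊆ F(x) + λ₁(δ)λ₂(x)𝔹 for every x ∈ ℝⁿ and every δ ≥ 0. -/
open Metric Set Filter MeasureTheory
open scoped Pointwise RealInnerProductSpace Topology

variable {E : Type*} [NormedAddCommGroup E] [NormedSpace ℝ E]

set_option linter.unusedSectionVars false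

section Clamp

noncomputable def clamp01 (t : ℝ) : ℝ := max 0 (min 1 t)

lemma clamp01_nonneg (t : ℝ) : 0 ≤ clamp01 t := le_max_left _ _

lemma clamp01_le_one (t : ℝ) : clamp01 t ≤ 1 := max_le zero_le_one (min_le_left _ _)

lemma clamp01_continuous : Continuous clamp01 :=
  continuous_const.max (continuous_const.min continuous_id)

lemma clamp01_of_nonpos {t : ℝ} (h : t ≤ 0) : clamp01 t = 0 :=
  max_eq_left (le_trans (min_le_right _ _) h)

lemma clamp01_of_one_le {t : ℝ} (h : 1 ≤ t) : clamp01 t = 1 := by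
  rw [clamp01, min_eq_left h, max_eq_right zero_le_one]

noncomputable def interpSeq (C : ℕ → ℝ) (r : ℝ) : ℝ :=
  C 0 + ∑ k ∈ Finset.range ⌈max r 0⌉₊, (C (k+1) - C k) * clamp01 (r - k)

lemma interpSeq_eq (C : ℕ → ℝ) {N : ℕ} {r : ℝ} (h : r ≤ N) :
    interpSeq C r = C 0 + ∑ k ∈ Finset.range N, (C (k+1) - C k) * clamp01 (r - k) := by
  unfold interpSeq
  congr 1
  refine Finset.sum_subset ?_ ?_
  · apply Finset.range_subset_range.2
    exact Nat.ceil_le.2 (max_le h (by exact_mod_cast Nat.zero_le N))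
  · intro k _ hk
    have hk' : ⌈max r 0⌉₊ ≤ k := by simpa [Finset.mem_range, not_lt] using hk
    have : r ≤ (k : ℝ) := le_trans (le_max_left _ _) (le_trans (Nat.le_ceil _) (by exact_mod_cast hk'))
    rw [clamp01_of_nonpos (by linarith), mul_zero]

lemma continuous_interpSeq (C : ℕ → ℝ) : Continuous (interpSeq C) := by
  rw [continuous_iff_continuousAt]
  intro r₀
  set N : ℕ := ⌈max r₀ 0⌉₊ + 1 with hN
  have hc : ContinuousAt (fun r => C 0 + ∑ k ∈ Finset.range N, (C (k+1) - C k) * clamp01 (r - k)) r₀ := by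
    apply Continuous.continuousAt
    exact continuous_const.add (continuous_finset_sum _ fun k _ =>
      continuous_const.mul (clamp01_continuous.comp (continuous_id.sub continuous_const)))
  apply hc.congr
  have hmem : Set.Iio ((N : ℝ)) ∈ 𝓝 r₀ := by
    apply Iio_mem_nhds
    calc r₀ ≤ max r₀ 0 := le_max_left _ _
    _ ≤ ⌈max r₀ 0⌉₊ := Nat.le_ceil _
    _ < N := by exact_mod_cast Nat.lt_succ_self _
  filter_upwards [hmem] with r hr
  exact (interpSeq_eq C hr.le).symm

lemma le_interpSeq (C : ℕ → ℝ) (hC : Monotone C) (r : ℝ) : C 0 ≤ interpSeq C r := by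
  unfold interpSeq
  have : (0:ℝ) ≤ ∑ k ∈ Finset.range ⌈max r 0⌉₊, (C (k+1) - C k) * clamp01 (r - k) :=
    Finset.sum_nonneg fun k _ => mul_nonneg (by linarith [hC (Nat.le_succ k)]) (clamp01_nonneg _)
  linarith

lemma floor_le_interpSeq (C : ℕ → ℝ) (hC : Monotone C) {r : ℝ} (hr : 0 ≤ r) :
    C ⌊r⌋₊ ≤ interpSeq C r := by
  unfold interpSeq
  have h1 : ∑ k ∈ Finset.range ⌊r⌋₊, (C (k+1) - C k) * clamp01 (r - k)
      ≤ ∑ k ∈ Finset.range ⌈max r 0⌉₊, (C (k+1) - C k) * clamp01 (r - k) := by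
    apply Finset.sum_le_sum_of_subset_of_nonneg
    · apply Finset.range_subset_range.2
      rw [max_eq_left hr]
      exact Nat.floor_le_ceil r
    · intro k _ _
      exact mul_nonneg (by linarith [hC (Nat.le_succ k)]) (clamp01_nonneg _)
  have h2 : ∑ k ∈ Finset.range ⌊r⌋₊, (C (k+1) - C k) * clamp01 (r - k)
      = C ⌊r⌋₊ - C 0 := by
    rw [← Finset.sum_range_sub (fun k => C k)]
    apply Finset.sum_congr rfl
    intro k hk
    have hk' : (k:ℝ) + 1 ≤ r := by
      have : k + 1 ≤ ⌊r⌋₊ := Nat.succ_le_of_lt (Finset.mem_range.1 hk)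
      calc ((k:ℝ)+1) = ((k+1 : ℕ) : ℝ) := by push_cast; ring
      _ ≤ (⌊r⌋₊ : ℝ) := by exact_mod_cast this
      _ ≤ r := Nat.floor_le hr
    rw [clamp01_of_one_le (by linarith), mul_one]
  linarith

end Clamp

section AuxSV

lemma svImage_mono (F : E → Set E) {S T : Set E} (h : S ⊆ T) :
    svImage F S ⊆ svImage F T := by
  intro z hz
  simp [svImage] at hz ⊢
  obtain ⟨y, hy, hzy⟩ := hz
  exact ⟨y, h hy, hzy⟩

lemma mem_svImage {F : E → Set E} {S : Set E} {z : E} :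
    z ∈ svImage F S ↔ ∃ y ∈ S, z ∈ F y := by
  simp [svImage]

lemma bounded_images [ProperSpace E] (F : E → Set E) (hFusc : UpperSemicontinuousSV F)
    (hFcpt : ∀ x, IsCompact (F x)) (r : ℝ) :
    ∃ Rb : ℝ, ∀ y : E, ‖y‖ ≤ r → ∀ z ∈ F y, ‖z‖ ≤ Rb := by
  have hρ : ∀ y : E, ∃ ρ : ℝ, F y ⊆ ball 0 ρ := fun y => ((hFcpt y).isBounded).subset_ball 0
  choose ρ hρ using hρ
  set U : E → Set E := fun y => {w | F w ⊆ ball 0 (ρ y)} with hU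
  have hUnhds : ∀ y ∈ closedBall (0:E) r, U y ∈ 𝓝 y := fun y _ =>
    hFusc y _ isOpen_ball (hρ y)
  obtain ⟨t, -, ht⟩ := (isCompact_closedBall (0:E) r).elim_nhds_subcover U hUnhds
  refine ⟨((t.sup fun y => ⌈max 0 (ρ y)⌉₊ : ℕ) : ℝ), ?_⟩
  intro y hy z hz
  have : y ∈ ⋃ y₀ ∈ t, U y₀ := ht (mem_closedBall_zero_iff.2 hy)
  rw [mem_iUnion₂] at this
  obtain ⟨y₀, hy₀t, hy₀⟩ := this
  have h1 : ‖z‖ < ρ y₀ := mem_ball_zero_iff.1 (hy₀ hz)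
  have h2 : ρ y₀ ≤ ((⌈max 0 (ρ y₀)⌉₊ : ℕ) : ℝ) :=
    le_trans (le_max_right _ _) (Nat.le_ceil _)
  have h3 : ((⌈max 0 (ρ y₀)⌉₊ : ℕ) : ℝ) ≤ ((t.sup fun y => ⌈max 0 (ρ y)⌉₊ : ℕ) : ℝ) := by
    have := Finset.le_sup (f := fun y => ⌈max 0 (ρ y)⌉₊) hy₀t
    exact_mod_cast this
  linarith

lemma unif_bound [ProperSpace E] (F : E → Set E) (hFusc : UpperSemicontinuousSV F)
    (hFne : ∀ x, (F x).Nonempty) (hFcpt : ∀ x, IsCompact (F x)) (k : ℕ) :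
    ∃ M : ℝ, 2 ≤ M ∧ ∀ x : E, ∀ δ : ℝ, ‖x‖ ≤ k+1 → 0 ≤ δ → δ ≤ k+1 →
      svImage F (closedBall x δ) ⊆ F x + closedBall 0 M := by
  obtain ⟨Rb, hRb⟩ := bounded_images F hFusc hFcpt (2*k+2)
  refine ⟨max 2 (2*Rb), le_max_left _ _, ?_⟩
  intro x δ hx hδ0 hδ z hz
  obtain ⟨y, hy, hzy⟩ := mem_svImage.1 hz
  have hyn : ‖y‖ ≤ 2*k+2 := by
    have : dist y x ≤ δ := mem_closedBall.1 hy
    have hn : ‖y‖ ≤ ‖y - x‖ + ‖x‖ := by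
      have h := norm_add_le (y - x) x
      rwa [sub_add_cancel] at h
    rw [dist_eq_norm] at this
    linarith
  have hxn : ‖x‖ ≤ 2*k+2 := by linarith [hx, (Nat.cast_nonneg k : (0:ℝ) ≤ k)]
  have hzn : ‖z‖ ≤ Rb := hRb y hyn z hzy
  obtain ⟨w, hw⟩ := hFne x
  have hwn : ‖w‖ ≤ Rb := hRb x hxn w hw
  refine ⟨w, hw, z - w, ?_, by show w + (z - w) = z; rw [add_comm, sub_add_cancel]⟩
  rw [mem_closedBall_zero_iff]
  calc ‖z - w‖ ≤ ‖z‖ + ‖w‖ := norm_sub_le _ _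
  _ ≤ 2*Rb := by linarith
  _ ≤ max 2 (2*Rb) := le_max_right _ _

lemma unif_cont [ProperSpace E] (F : E → Set E) (hFusc : UpperSemicontinuousSV F)
    (hFlsc : LowerSemicontinuousSV F) (hFne : ∀ x, (F x).Nonempty)
    (hFcpt : ∀ x, IsCompact (F x)) (k : ℕ) (ε : ℝ) (hε : 0 < ε) :
    ∃ δ : ℝ, 0 < δ ∧ ∀ x : E, ‖x‖ ≤ k+1 →
      svImage F (closedBall x δ) ⊆ F x + closedBall 0 ε := by
  by_contra hc
  push_neg at hc
  have hseq : ∀ i : ℕ, ∃ x y z : E, ‖x‖ ≤ k+1 ∧ y ∈ closedBall x (1/(i+1)) ∧ z ∈ F y ∧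
      z ∉ F x + closedBall 0 ε := by
    intro i
    obtain ⟨x, hx, hnsub⟩ := hc (1/(i+1)) (by positivity)
    obtain ⟨z, hz, hz'⟩ := Set.not_subset.1 hnsub
    obtain ⟨y, hy, hzy⟩ := mem_svImage.1 hz
    exact ⟨x, y, z, hx, hy, hzy, hz'⟩
  choose x y z h1 h2 h3 h4 using hseq
  obtain ⟨Rb, hRb⟩ := bounded_images F hFusc hFcpt (k+2)
  have hyn : ∀ i, ‖y i‖ ≤ k+2 := by
    intro i
    have hd : dist (y i) (x i) ≤ 1/(i+1) := mem_closedBall.1 (h2 i)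
    have h1' : (1:ℝ)/(i+1) ≤ 1 := by
      rw [div_le_one (by positivity)]
      linarith [(Nat.cast_nonneg i : (0:ℝ) ≤ i)]
    have hn : ‖y i‖ ≤ ‖y i - x i‖ + ‖x i‖ := by
      have h := norm_add_le (y i - x i) (x i)
      rwa [sub_add_cancel] at h
    rw [dist_eq_norm] at hd
    have := h1 i
    linarith
  have hzn : ∀ i, ‖z i‖ ≤ Rb := fun i => hRb (y i) (hyn i) (z i) (h3 i)
  obtain ⟨xl, _, φ₁, hφ₁, hx⟩ := (isCompact_closedBall (0:E) (k+1)).tendsto_subseq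
    (fun i => mem_closedBall_zero_iff.2 (h1 i))
  obtain ⟨zl, _, φ₂, hφ₂, hzt⟩ := (isCompact_closedBall (0:E) Rb).tendsto_subseq
    (fun i => mem_closedBall_zero_iff.2 (hzn (φ₁ i)))
  set φ : ℕ → ℕ := φ₁ ∘ φ₂ with hφdef
  have hφmono : StrictMono φ := hφ₁.comp hφ₂
  have hxφ : Tendsto (fun i => x (φ i)) atTop (𝓝 xl) := hx.comp hφ₂.tendsto_atTop
  have hzφ : Tendsto (fun i => z (φ i)) atTop (𝓝 zl) := hzt
  have hdyx : Tendsto (fun i => dist (y (φ i)) (x (φ i))) atTop (𝓝 0) := by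
    have hb : ∀ i : ℕ, dist (y (φ i)) (x (φ i)) ≤ 1/(i+1) := by
      intro i
      refine le_trans (mem_closedBall.1 (h2 (φ i))) ?_
      apply one_div_le_one_div_of_le (by positivity)
      have : (i:ℝ) ≤ (φ i : ℝ) := by exact_mod_cast hφmono.le_apply
      linarith
    exact squeeze_zero (fun i => dist_nonneg) hb tendsto_one_div_add_atTop_nhds_zero_nat
  have hyφ : Tendsto (fun i => y (φ i)) atTop (𝓝 xl) := by
    rw [tendsto_iff_dist_tendsto_zero]
    apply squeeze_zero (fun i => dist_nonneg)
      (fun i => dist_triangle (y (φ i)) (x (φ i)) xl)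
    have := hdyx.add (tendsto_iff_dist_tendsto_zero.1 hxφ)
    simpa using this
  have hzmem : zl ∈ F xl := by
    by_contra hmem
    have hd : 0 < infDist zl (F xl) :=
      ((hFcpt xl).isClosed.notMem_iff_infDist_pos (hFne xl)).1 hmem
    set d := infDist zl (F xl) with hddef
    have hU := hFusc xl (thickening (d/2) (F xl)) isOpen_thickening
      (self_subset_thickening (by linarith) _)
    have hev : ∀ᶠ i in atTop, F (y (φ i)) ⊆ thickening (d/2) (F xl) := hyφ.eventually hU
    have hev2 : ∀ᶠ i in atTop, infDist (z (φ i)) (F xl) ≤ d/2 := by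
      filter_upwards [hev] with i hi
      exact ((mem_thickening_iff_infDist_lt (hFne xl)).1 (hi (h3 (φ i)))).le
    have hcont : Tendsto (fun i => infDist (z (φ i)) (F xl)) atTop (𝓝 d) :=
      ((continuous_infDist_pt (F xl)).tendsto zl).comp hzφ
    have : d ≤ d/2 := le_of_tendsto hcont hev2
    linarith
  obtain ⟨v, hv, hvt⟩ := hFlsc xl zl hzmem (fun i => x (φ i)) hxφ
  have hdzv : Tendsto (fun i => dist (z (φ i)) (v i)) atTop (𝓝 (dist zl zl)) := hzφ.dist hvt
  rw [dist_self] at hdzv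
  obtain ⟨i, hi⟩ := (hdzv.eventually (gt_mem_nhds hε)).exists
  apply h4 (φ i)
  refine ⟨v i, hv i, z (φ i) - v i, ?_, by show v i + (z (φ i) - v i) = z (φ i); rw [add_comm, sub_add_cancel]⟩
  rw [mem_closedBall_zero_iff, ← dist_eq_norm]
  exact hi.le

end AuxSV

/-- For a continuous set-valued map with nonempty compact values there exist
continuous `λ₁ : [0,∞) → [0,∞)` with `λ₁(0) = 0` and `λ₂ : ℝⁿ → [0,∞)` such that
`F(x + δ𝔹) ⊆ F(x) + λ₁(δ)λ₂(x)𝔹` for all `x` and `δ ≥ 0`. -/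
theorem stmt9 {n : ℕ} (F : EuclideanSpace ℝ (Fin n) → Set (EuclideanSpace ℝ (Fin n)))
    (hFusc : UpperSemicontinuousSV F) (hFlsc : LowerSemicontinuousSV F)
    (hFne : ∀ x, (F x).Nonempty) (hFcpt : ∀ x, IsCompact (F x)) :
    ∃ lam1 : ℝ → ℝ, ∃ lam2 : EuclideanSpace ℝ (Fin n) → ℝ,
      ContinuousOn lam1 (Set.Ici 0) ∧ (∀ δ ∈ Set.Ici (0:ℝ), 0 ≤ lam1 δ) ∧ lam1 0 = 0 ∧
      Continuous lam2 ∧ (∀ x, 0 ≤ lam2 x) ∧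
      (∀ x : EuclideanSpace ℝ (Fin n), ∀ δ ≥ (0:ℝ),
        svImage F (Metric.closedBall x δ) ⊆ F x + Metric.closedBall 0 (lam1 δ * lam2 x)) := by
  classical
  choose M0 hM02 hM0P using unif_bound F hFusc hFne hFcpt
  choose D hD0 hDP using fun k => unif_cont F hFusc hFlsc hFne hFcpt k ((1/2)^k) (by positivity)
  -- monotone envelope of the bounds M0
  set M : ℕ → ℝ := fun k => Nat.rec (motive := fun _ => ℝ) (M0 0) (fun j p => max p (M0 (j+1))) k
    with hMdef
  have hMsucc : ∀ k, M (k+1) = max (M k) (M0 (k+1)) := fun k => rfl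
  have hMmono : Monotone M :=
    monotone_nat_of_le_succ (fun k => by rw [hMsucc]; exact le_max_left _ _)
  have hMge : ∀ k, M0 k ≤ M k := by
    intro k
    cases k with
    | zero => exact le_refl _
    | succ j => rw [hMsucc]; exact le_max_right _ _
  have hM2 : ∀ k, 2 ≤ M k := fun k =>
    le_trans (le_trans (hM02 0) (hMge 0)) (hMmono (Nat.zero_le k))
  -- the decreasing scale sequence
  set δs : ℕ → ℝ := fun k => Nat.rec (motive := fun _ => ℝ) (min (D 0) 1)
    (fun j p => min (min (D (j+1)) (p/2)) ((1/2)^(j+1))) k with hδsdef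
  have hδssucc : ∀ k, δs (k+1) = min (min (D (k+1)) (δs k / 2)) ((1/2)^(k+1)) := fun k => rfl
  have hδs0 : δs 0 = min (D 0) 1 := rfl
  have hδspos : ∀ k, 0 < δs k := by
    intro k
    induction k with
    | zero => exact lt_min (hD0 0) one_pos
    | succ j ih => rw [hδssucc]; exact lt_min (lt_min (hD0 _) (by linarith)) (by positivity)
  have hδsle : ∀ k, δs k ≤ (1/2)^k := by
    intro k
    cases k with
    | zero => simpa [hδs0] using min_le_right (D 0) 1
    | succ j => rw [hδssucc]; exact min_le_right _ _
  have hδsD : ∀ k, δs k ≤ D k := by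
    intro k
    cases k with
    | zero => exact min_le_left _ _
    | succ j => rw [hδssucc]; exact le_trans (min_le_left _ _) (min_le_left _ _)
  have hδsdec : ∀ k, δs (k+1) < δs k := by
    intro k
    rw [hδssucc]
    refine lt_of_le_of_lt (le_trans (min_le_left _ _) (min_le_right _ _)) ?_
    linarith [hδspos k]
  -- key uniform continuity property
  have hkey : ∀ (m : ℕ) (x : EuclideanSpace ℝ (Fin n)) (δ : ℝ), ‖x‖ ≤ m+1 → δ ≤ δs m →
      svImage F (closedBall x δ) ⊆ F x + closedBall 0 ((1/2)^m) := by
    intro m x δ hx hδ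
    exact Set.Subset.trans
      (svImage_mono F (closedBall_subset_closedBall (hδ.trans (hδsD m)))) (hDP m x hx)
  -- the small-δ part of lam1
  set u : ℕ → ℝ → ℝ :=
    fun m δ => (1/2)^m * clamp01 ((δ - δs (m+2)) / (δs (m+1) - δs (m+2))) with hudef
  have hu_nonneg : ∀ m δ, 0 ≤ u m δ := fun m δ => mul_nonneg (by positivity) (clamp01_nonneg _)
  have hu_le : ∀ m δ, u m δ ≤ (1/2)^m := by
    intro m δ
    calc u m δ ≤ (1/2)^m * 1 := mul_le_mul_of_nonneg_left (clamp01_le_one _) (by positivity)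
    _ = (1/2)^m := mul_one _
  have hgeom : Summable (fun m : ℕ => ((1/2:ℝ))^m) :=
    summable_geometric_of_lt_one (by norm_num) (by norm_num)
  have husum : ∀ δ, Summable (fun m => u m δ) := fun δ =>
    Summable.of_nonneg_of_le (fun m => hu_nonneg m δ) (fun m => hu_le m δ) hgeom
  set lam1s : ℝ → ℝ := fun δ => ∑' m, u m δ with hlam1sdef
  have hlam1s_cont : Continuous lam1s := by
    apply continuous_tsum ?_ hgeom ?_
    · intro m
      exact continuous_const.mul (clamp01_continuous.comp
        ((continuous_id.sub continuous_const).div_const _))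
    · intro m δ
      rw [Real.norm_eq_abs, abs_of_nonneg (hu_nonneg m δ)]
      exact hu_le m δ
  have hlam1s_zero : lam1s 0 = 0 := by
    have hz : ∀ m, u m 0 = 0 := by
      intro m
      rw [hudef]
      simp only
      rw [clamp01_of_nonpos, mul_zero]
      apply div_nonpos_of_nonpos_of_nonneg
      · linarith [hδspos (m+2)]
      · linarith [hδsdec (m+1)]
    simp only [hlam1sdef, hz, tsum_zero]
  have hlam1s_nonneg : ∀ δ, 0 ≤ lam1s δ := fun δ => tsum_nonneg (fun m => hu_nonneg m δ)
  have hlam1s_ge : ∀ m δ, δs (m+1) ≤ δ → (1/2)^m ≤ lam1s δ := by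
    intro m δ h
    have hden : 0 < δs (m+1) - δs (m+2) := by linarith [hδsdec (m+1)]
    have hterm : u m δ = (1/2)^m := by
      rw [hudef]
      simp only
      rw [clamp01_of_one_le, mul_one]
      rw [le_div_iff₀ hden]
      linarith
    calc (1/2:ℝ)^m = u m δ := hterm.symm
    _ ≤ lam1s δ := Summable.le_tsum (husum δ) m (fun j _ => hu_nonneg j δ)
  -- the x-dependent sequence
  set B : ℕ → ℝ := fun k => 2^k * M k with hBdef
  have hBmono : Monotone B := by
    intro a b hab
    rw [hBdef]
    simp only
    apply mul_le_mul (pow_le_pow_right₀ one_le_two hab) (hMmono hab)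
      (le_trans (by norm_num) (hM2 a)) (by positivity)
  have hB0 : (1:ℝ) ≤ B 0 := by
    rw [hBdef]; simp only [pow_zero, one_mul]; linarith [hM2 0]
  set lam1 : ℝ → ℝ := fun δ => lam1s δ + clamp01 δ * interpSeq M δ with hlam1def
  set lam2 : EuclideanSpace ℝ (Fin n) → ℝ := fun x => interpSeq B ‖x‖ with hlam2def
  have hinterpM_nonneg : ∀ δ, 0 ≤ interpSeq M δ := fun δ =>
    le_trans (le_trans (by norm_num) (hM2 0)) (le_interpSeq M hMmono δ)
  have hlam1_nonneg : ∀ δ, 0 ≤ lam1 δ := fun δ =>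
    add_nonneg (hlam1s_nonneg δ) (mul_nonneg (clamp01_nonneg δ) (hinterpM_nonneg δ))
  have hlam2_one : ∀ x, 1 ≤ lam2 x := fun x =>
    le_trans hB0 (le_interpSeq B hBmono ‖x‖)
  refine ⟨lam1, lam2, ?_, ?_, ?_, ?_, ?_, ?_⟩
  · exact (hlam1s_cont.add (clamp01_continuous.mul (continuous_interpSeq M))).continuousOn
  · exact fun δ _ => hlam1_nonneg δ
  · rw [hlam1def]
    simp only
    rw [hlam1s_zero, clamp01_of_nonpos (le_refl 0), zero_mul, add_zero]
  · exact (continuous_interpSeq B).comp continuous_norm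
  · exact fun x => le_trans zero_le_one (hlam2_one x)
  · intro x δ hδ0
    set k := ⌊‖x‖⌋₊ with hkdef
    have hxk : ‖x‖ ≤ (k:ℝ)+1 := (Nat.lt_floor_add_one _).le
    have hlam2B : B k ≤ lam2 x := floor_le_interpSeq B hBmono (norm_nonneg x)
    rcases eq_or_lt_of_le hδ0 with h0 | hpos
    · -- δ = 0
      intro z hz
      rw [← h0] at hz
      rw [Metric.closedBall_zero] at hz
      have hzF : z ∈ F x := by
        obtain ⟨y, hy, hzy⟩ := mem_svImage.1 hz
        rwa [Set.mem_singleton_iff.1 hy] at hzy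
      refine ⟨z, hzF, 0, ?_, add_zero z⟩
      rw [mem_closedBall_zero_iff, norm_zero]
      exact mul_nonneg (hlam1_nonneg δ) (le_trans zero_le_one (hlam2_one x))
    · -- δ > 0
      obtain ⟨ε₀, hP, hle⟩ : ∃ ε₀, (svImage F (closedBall x δ) ⊆ F x + closedBall 0 ε₀) ∧
          ε₀ ≤ lam1 δ * lam2 x := by
        by_cases hA : δ ≤ δs k
        · -- small δ
          obtain ⟨N₀, hN₀⟩ := exists_pow_lt_of_lt_one hpos (by norm_num : (1/2:ℝ) < 1)
          set N := max N₀ k with hNdef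
          set Pm : ℕ → Prop := fun m => δ ≤ δs m with hPmdef
          set m := Nat.findGreatest Pm N with hmdef
          have hkN : k ≤ N := le_max_right _ _
          have hm : Pm m := Nat.findGreatest_spec hkN hA
          have hkm : k ≤ m := Nat.le_findGreatest hkN hA
          have hmN : m ≤ N := Nat.findGreatest_le N
          have hNnot : ¬ Pm N := by
            intro h
            have h1 : δs N ≤ (1/2)^N := hδsle N
            have h2 : (1/2:ℝ)^N ≤ (1/2)^N₀ :=
              pow_le_pow_of_le_one (by norm_num) (by norm_num) (le_max_left _ _)
            have h3 : δ ≤ δs N := h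
            linarith
          have hmltN : m < N := lt_of_le_of_ne hmN (fun h => hNnot (h ▸ hm))
          have hm1 : ¬ Pm (m+1) :=
            Nat.findGreatest_is_greatest (Nat.lt_succ_self m) hmltN
          have hδm1 : δs (m+1) < δ := not_le.1 hm1
          have hxm : ‖x‖ ≤ (m:ℝ)+1 := by
            refine le_trans hxk ?_
            have : (k:ℝ) ≤ (m:ℝ) := by exact_mod_cast hkm
            linarith
          refine ⟨(1/2)^m, hkey m x δ hxm hm, ?_⟩
          have h1 : (1/2:ℝ)^m ≤ lam1 δ :=
            le_trans (hlam1s_ge m δ hδm1.le)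
              (le_add_of_nonneg_right (mul_nonneg (clamp01_nonneg δ) (hinterpM_nonneg δ)))
          calc (1/2:ℝ)^m = (1/2)^m * 1 := (mul_one _).symm
          _ ≤ lam1 δ * lam2 x :=
            mul_le_mul h1 (hlam2_one x) zero_le_one (le_trans (by positivity) h1)
        · -- large δ
          push_neg at hA
          set j := max k ⌊δ⌋₊ with hjdef
          have hxj : ‖x‖ ≤ (j:ℝ)+1 := by
            refine le_trans hxk ?_
            have : (k:ℝ) ≤ (j:ℝ) := by exact_mod_cast le_max_left k ⌊δ⌋₊
            linarith
          have hδj : δ ≤ (j:ℝ)+1 := by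
            have h1 : δ < (⌊δ⌋₊:ℝ)+1 := Nat.lt_floor_add_one δ
            have h2 : ((⌊δ⌋₊:ℕ):ℝ) ≤ (j:ℝ) := by exact_mod_cast le_max_right k ⌊δ⌋₊
            linarith
          refine ⟨M0 j, hM0P j x δ hxj hδ0 hδj, ?_⟩
          have hMj : M0 j ≤ M j := hMge j
          rcases le_or_gt ⌊δ⌋₊ k with hjk | hjk
          · have hjek : j = k := max_eq_left hjk
            have hδsk1 : δs (k+1) ≤ δ := le_of_lt (lt_trans (hδsdec k) hA)
            have h1 : (1/2:ℝ)^k ≤ lam1 δ :=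
              le_trans (hlam1s_ge k δ hδsk1)
                (le_add_of_nonneg_right (mul_nonneg (clamp01_nonneg δ) (hinterpM_nonneg δ)))
            have hBk_nonneg : 0 ≤ B k := by
              rw [hBdef]; simp only
              exact mul_nonneg (by positivity) (by linarith [hM2 k])
            have hkey2 : M k = (1/2:ℝ)^k * B k := by
              rw [hBdef]; simp only
              rw [← mul_assoc, one_div, inv_pow, inv_mul_cancel₀ (by positivity), one_mul]
            calc M0 j ≤ M k := hjek ▸ hMj
            _ = (1/2:ℝ)^k * B k := hkey2
            _ ≤ lam1 δ * lam2 x :=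
              mul_le_mul h1 hlam2B hBk_nonneg (le_trans (by positivity) h1)
          · have hjj : j = ⌊δ⌋₊ := max_eq_right hjk.le
            have hδ1 : (1:ℝ) ≤ δ := by
              have h1 : (1:ℕ) ≤ ⌊δ⌋₊ := by omega
              have h2 : ((1:ℕ):ℝ) ≤ (⌊δ⌋₊:ℝ) := by exact_mod_cast h1
              exact le_trans (by exact_mod_cast h2) (Nat.floor_le hδ0)
            have hclamp : clamp01 δ = 1 := clamp01_of_one_le hδ1
            have h1 : M ⌊δ⌋₊ ≤ lam1 δ := by
              calc M ⌊δ⌋₊ ≤ interpSeq M δ := floor_le_interpSeq M hMmono hδ0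
              _ = clamp01 δ * interpSeq M δ := by rw [hclamp, one_mul]
              _ ≤ lam1 δ := le_add_of_nonneg_left (hlam1s_nonneg δ)
            calc M0 j ≤ M j := hMj
            _ = M ⌊δ⌋₊ * 1 := by rw [hjj, mul_one]
            _ ≤ lam1 δ * lam2 x :=
              mul_le_mul h1 (hlam2_one x) zero_le_one
                (le_trans (by linarith [hM2 ⌊δ⌋₊]) h1)
      exact Set.Subset.trans hP
        (Set.add_subset_add_left (closedBall_subset_closedBall hle))
end

section
/- Let F : ℝⁿ → Set ℝⁿ, let X_o, X_u ⊆ ℝⁿ, and let B : ℝⁿ → ℝ be a continuous barrier function candidate with respect to (X_o, X_u) with zero-sublevel set K. Suppose there exists an open neighborhood U of ∂K such that for every solution φ of ẋ ∈ F(x) whose range is contained in U \ K, the map t ↦ B(φ(t)) is nonincreasing on the domain of φ. Then the system ẋ ∈ F(x) is safe with respect to (X_o, X_u). -/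
open Metric Set Filter MeasureTheory
open scoped Pointwise RealInnerProductSpace Topology

variable {E : Type*} [NormedAddCommGroup E] [NormedSpace ℝ E]

private lemma soldomain_nonneg {D : Set ℝ} (h : SolDomain D) {t : ℝ} (ht : t ∈ D) : 0 ≤ t := by
  rcases h with ⟨T, hT, rfl⟩ | ⟨T, hT, rfl⟩ | rfl
  · exact ht.1
  · exact ht.1
  · exact ht

private lemma soldomain_mem_of_le {D : Set ℝ} (h : SolDomain D) {s t : ℝ}
    (ht : t ∈ D) (hs0 : 0 ≤ s) (hst : s ≤ t) : s ∈ D := by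
  rcases h with ⟨T, hT, rfl⟩ | ⟨T, hT, rfl⟩ | rfl
  · exact ⟨hs0, hst.trans ht.2⟩
  · exact ⟨hs0, lt_of_le_of_lt hst ht.2⟩
  · exact hs0

private lemma soldomain_measurable {D : Set ℝ} (h : SolDomain D) : MeasurableSet D := by
  rcases h with ⟨T, hT, rfl⟩ | ⟨T, hT, rfl⟩ | rfl
  · exact measurableSet_Icc
  · exact measurableSet_Ico
  · exact measurableSet_Ici

private lemma isSolutionOn_shift {F : E → Set E} {φ : ℝ → E} {D : Set ℝ}
    (hsol : IsSolutionOn F φ D) {a b : ℝ} (ha0 : 0 ≤ a) (hab : a ≤ b) (hb : b ∈ D) :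
    IsSolutionOn F (fun s => φ (a + s)) (Set.Icc 0 (b - a)) := by
  obtain ⟨hD, v, hint, heq, hae⟩ := hsol
  have haD : a ∈ D := soldomain_mem_of_le hD hb ha0 hab
  have hIb : IntegrableOn v (Set.Icc 0 b) := hint b hb
  have key : ∀ τ : ℝ, τ ∈ Set.Icc 0 (b - a) → IntervalIntegrable v volume a (a + τ) := by
    intro τ hτ
    exact (intervalIntegrable_iff_integrableOn_Icc_of_le (by linarith [hτ.1])).2
      (hIb.mono_set (Set.Icc_subset_Icc (by linarith [hτ.1]) (by linarith [hτ.2])))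
  refine ⟨Or.inl ⟨b - a, by linarith, rfl⟩, fun s => v (a + s), ?_, ?_, ?_⟩
  · intro τ hτ
    have h3 := (key τ hτ).comp_add_left a
    have h4 : IntervalIntegrable (fun x => v (a + x)) volume 0 τ := by
      simpa using h3
    exact (intervalIntegrable_iff_integrableOn_Icc_of_le hτ.1).1 h4
  · intro τ hτ
    have haτD : a + τ ∈ D := soldomain_mem_of_le hD hb (by linarith [hτ.1]) (by linarith [hτ.2])
    have e1 := heq (a + τ) haτD
    have e2 := heq a haD
    have hIa : IntervalIntegrable v volume 0 a :=
      (intervalIntegrable_iff_integrableOn_Icc_of_le ha0).2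
        (hIb.mono_set (Set.Icc_subset_Icc le_rfl hab))
    have hadj := intervalIntegral.integral_add_adjacent_intervals hIa (key τ hτ)
    have e3 : (∫ x in (0:ℝ)..τ, v (a + x)) = ∫ x in a..(a + τ), v x := by
      rw [intervalIntegral.integral_comp_add_left, add_zero]
    simp only [add_zero]
    rw [e1, e2, e3, ← hadj]
    abel
  · have hDm := soldomain_measurable hD
    rw [ae_restrict_iff' measurableSet_Icc]
    have h := (ae_restrict_iff' hDm).1 hae
    have h2 : ∀ᵐ s : ℝ, (a + s) ∈ D → v (a + s) ∈ F (φ (a + s)) := by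
      rw [ae_iff] at h ⊢
      have hset : {s : ℝ | ¬((a + s) ∈ D → v (a + s) ∈ F (φ (a + s)))}
          = (fun s => a + s) ⁻¹' {t : ℝ | ¬(t ∈ D → v t ∈ F (φ t))} := rfl
      rw [hset, measure_preimage_add]
      exact h
    filter_upwards [h2] with s hs hsmem
    exact hs (soldomain_mem_of_le hD hb (by linarith [hsmem.1]) (by linarith [hsmem.2]))

/-- If `B` is a continuous barrier function candidate and there is an open
neighborhood `U` of `∂K` such that `B` is nonincreasing along every solution that remains
in `U \ K`, then `ẋ ∈ F x` is safe with respect to `(X_o, X_u)`. -/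
theorem stmt11 {n : ℕ} (F : EuclideanSpace ℝ (Fin n) → Set (EuclideanSpace ℝ (Fin n)))
    (Xo Xu : Set (EuclideanSpace ℝ (Fin n))) (B : EuclideanSpace ℝ (Fin n) → ℝ)
    (hBc : Continuous B) (hBu : ∀ x ∈ Xu, 0 < B x) (hBo : ∀ x ∈ Xo, B x ≤ 0)
    (U : Set (EuclideanSpace ℝ (Fin n))) (hUopen : IsOpen U)
    (hU : frontier {x | B x ≤ 0} ⊆ U)
    (hmono : ∀ (φ : ℝ → EuclideanSpace ℝ (Fin n)) (D : Set ℝ), IsSolutionOn F φ D →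
      (∀ t ∈ D, φ t ∈ U \ {x | B x ≤ 0}) → ∀ s ∈ D, ∀ t ∈ D, s ≤ t → B (φ t) ≤ B (φ s)) :
    Safe F Xo Xu := by
  intro φ D hsol hφ0 t ht hmem
  set K : Set (EuclideanSpace ℝ (Fin n)) := {x | B x ≤ 0} with hKdef
  have hKclosed : IsClosed K := isClosed_le hBc continuous_const
  have hBt : 0 < B (φ t) := hBu _ hmem
  obtain ⟨hD, v, hint, heq, hae⟩ := hsol
  have ht0 : 0 ≤ t := soldomain_nonneg hD ht
  have h0D : (0:ℝ) ∈ D := soldomain_mem_of_le hD ht le_rfl ht0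
  -- continuity of φ on [0, t]
  have hφc : ContinuousOn φ (Set.Icc 0 t) := by
    have hI : IntegrableOn v (Set.uIcc 0 t) := by
      rw [Set.uIcc_of_le ht0]; exact hint t ht
    have hc := intervalIntegral.continuousOn_primitive_interval hI
    rw [Set.uIcc_of_le ht0] at hc
    exact (continuousOn_const.add hc).congr
      (fun s hs => heq s (soldomain_mem_of_le hD ht hs.1 hs.2))
  have hBφc : ContinuousOn (fun s => B (φ s)) (Set.Icc 0 t) := hBc.comp_continuousOn hφc
  -- last time in K
  set S : Set ℝ := Set.Icc 0 t ∩ (fun s => B (φ s)) ⁻¹' Set.Iic 0 with hSdef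
  have hSclosed : IsClosed S :=
    hBφc.preimage_isClosed_of_isClosed isClosed_Icc isClosed_Iic
  have hScpt : IsCompact S := IsCompact.of_isClosed_subset isCompact_Icc hSclosed
    Set.inter_subset_left
  have hSne : S.Nonempty := ⟨0, ⟨le_rfl, ht0⟩, hBo _ hφ0⟩
  obtain ⟨t₁, ht₁S, ht₁ub⟩ : ∃ t₁ ∈ S, ∀ s ∈ S, s ≤ t₁ :=
    ⟨sSup S, hScpt.sSup_mem hSne, fun s hs => le_csSup hScpt.bddAbove hs⟩
  have ht₁mem : t₁ ∈ Set.Icc 0 t := ht₁S.1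
  have hBt₁ : B (φ t₁) ≤ 0 := ht₁S.2
  have ht₁t : t₁ < t := lt_of_le_of_ne ht₁mem.2 (by rintro rfl; exact absurd hBt₁ (not_le.2 hBt))
  have hgt : ∀ s : ℝ, t₁ < s → s ≤ t → 0 < B (φ s) := by
    intro s hs1 hs2
    by_contra hcon
    exact absurd (ht₁ub s ⟨⟨le_trans ht₁mem.1 hs1.le, hs2⟩, not_lt.1 hcon⟩) (not_le.2 hs1)
  -- φ t₁ ∈ frontier K ⊆ U
  have hneIoc : (nhdsWithin t₁ (Set.Ioc t₁ t)).NeBot := by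
    rw [← mem_closure_iff_nhdsWithin_neBot, closure_Ioc ht₁t.ne]
    exact ⟨le_rfl, ht₁t.le⟩
  have htend : Tendsto φ (nhdsWithin t₁ (Set.Ioc t₁ t)) (nhds (φ t₁)) :=
    (hφc.continuousWithinAt ht₁mem).mono
      (fun s hs => ⟨le_trans ht₁mem.1 hs.1.le, hs.2⟩)
  have hfront : φ t₁ ∈ frontier K := by
    rw [frontier_eq_closure_inter_closure]
    refine ⟨subset_closure hBt₁, ?_⟩
    exact mem_closure_of_tendsto htend
      (eventually_nhdsWithin_of_forall (fun s hs => not_le.2 (hgt s hs.1 hs.2)))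
  have hU₁ : φ t₁ ∈ U := hU hfront
  -- neighborhood in which φ stays in U
  have hUev : φ ⁻¹' U ∈ nhdsWithin t₁ (Set.Icc 0 t) :=
    (hφc.continuousWithinAt ht₁mem) (hUopen.mem_nhds hU₁)
  obtain ⟨δ, hδ, hδsub⟩ := mem_nhdsWithin_iff.1 hUev
  set b : ℝ := min t (t₁ + δ / 2) with hbdef
  have ht₁b : t₁ < b := lt_min ht₁t (by linarith)
  have hbt : b ≤ t := min_le_left _ _
  have hbmem : b ∈ Set.Icc 0 t := ⟨le_trans ht₁mem.1 ht₁b.le, hbt⟩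
  have hbD : b ∈ D := soldomain_mem_of_le hD ht hbmem.1 hbt
  have hIocU : ∀ s : ℝ, s ∈ Set.Ioc t₁ b → φ s ∈ U \ K := by
    intro s hs
    have hs1 : s ∈ Set.Icc 0 t := ⟨le_trans ht₁mem.1 hs.1.le, le_trans hs.2 hbt⟩
    have hsb : s ≤ t₁ + δ / 2 := le_trans hs.2 (min_le_right _ _)
    have hsball : s ∈ Metric.ball t₁ δ := by
      rw [Metric.mem_ball, Real.dist_eq, abs_of_pos (by linarith [hs.1])]
      linarith
    refine ⟨hδsub ⟨hsball, hs1⟩, ?_⟩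
    exact not_le.2 (hgt s hs.1 hs1.2)
  -- monotonicity on (t₁, b]
  have hkey : ∀ a : ℝ, a ∈ Set.Ioc t₁ b → B (φ b) ≤ B (φ a) := by
    intro a ha
    have ha0 : 0 ≤ a := le_trans ht₁mem.1 ha.1.le
    have hsol' : IsSolutionOn F (fun s => φ (a + s)) (Set.Icc 0 (b - a)) :=
      isSolutionOn_shift ⟨hD, v, hint, heq, hae⟩ ha0 ha.2 hbD
    have hin : ∀ s ∈ Set.Icc 0 (b - a), φ (a + s) ∈ U \ K := by
      intro s hs
      exact hIocU (a + s) ⟨lt_of_lt_of_le ha.1 (by linarith [hs.1]), by linarith [hs.2]⟩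
    have := hmono _ _ hsol' hin 0 ⟨le_rfl, by linarith [ha.2]⟩ (b - a)
      ⟨by linarith [ha.2], le_rfl⟩ (by linarith [ha.2])
    simpa using this
  -- take the limit a → t₁⁺
  have htendB : Tendsto (fun a => B (φ a)) (nhdsWithin t₁ (Set.Ioc t₁ b)) (nhds (B (φ t₁))) := by
    have hne2 : (nhdsWithin t₁ (Set.Ioc t₁ b)).NeBot := by
      rw [← mem_closure_iff_nhdsWithin_neBot, closure_Ioc ht₁b.ne]
      exact ⟨le_rfl, ht₁b.le⟩
    exact (hBφc.continuousWithinAt ht₁mem).mono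
      (fun s hs => ⟨le_trans ht₁mem.1 hs.1.le, le_trans hs.2 hbt⟩)
  have hne2 : (nhdsWithin t₁ (Set.Ioc t₁ b)).NeBot := by
    rw [← mem_closure_iff_nhdsWithin_neBot, closure_Ioc ht₁b.ne]
    exact ⟨le_rfl, ht₁b.le⟩
  have hfinal : B (φ b) ≤ B (φ t₁) :=
    ge_of_tendsto htendB (eventually_nhdsWithin_of_forall hkey)
  have : 0 < B (φ b) := hgt b ht₁b hbt
  linarith
end

section
/- Let F : ℝⁿ → Set ℝⁿ be a continuous set-valued map with F(x) nonempty, compact, and convex for every x. Then for each continuous function ε : ℝⁿ → (0,∞) there exists a continuous function δ : ℝⁿ → (0,∞) such that F(x + δ(x)𝔹) ⊆ F(x) + ε(x)𝔹 for every x ∈ ℝⁿ. -/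
open Metric Set Filter MeasureTheory
open scoped Pointwise RealInnerProductSpace Topology

variable {E : Type*} [NormedAddCommGroup E] [NormedSpace ℝ E]

section Aux
variable {E' : Type*} [NormedAddCommGroup E'] [NormedSpace ℝ E']

lemma usc_ball_aux {F : E' → Set E'} (hF : UpperSemicontinuousSV F)
    (hne : ∀ x, (F x).Nonempty) (hcpt : ∀ x, IsCompact (F x))
    (x : E') {η : ℝ} (hη : 0 < η) :
    ∃ r > 0, ∀ z ∈ ball x r, ∀ u ∈ F z, ∃ q ∈ F x, dist u q ≤ η := by
  set U : Set E' := {u | infDist u (F x) < η} with hU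
  have hUo : IsOpen U := isOpen_lt (continuous_infDist_pt (F x)) continuous_const
  have hsub : F x ⊆ U := fun p hp => by
    simpa [hU, infDist_zero_of_mem hp] using hη
  have h' := hF x U hUo hsub
  rcases Metric.eventually_nhds_iff_ball.1 h' with ⟨r, hr, h⟩
  refine ⟨r, hr, fun z hz u hu => ?_⟩
  have hlt : infDist u (F x) < η := h z hz hu
  rcases (hcpt x).exists_infDist_eq_dist (hne x) u with ⟨q, hq, hqe⟩
  exact ⟨q, hq, by rw [hqe] at hlt; exact hlt.le⟩

lemma lsc_pt_aux {F : E' → Set E'} (hF : LowerSemicontinuousSV F)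
    (x : E') {p : E'} (hp : p ∈ F x) {η : ℝ} (hη : 0 < η) :
    ∃ r > 0, ∀ y ∈ ball x r, ∃ q ∈ F y, dist p q ≤ η := by
  by_contra h
  push_neg at h
  have key : ∀ i : ℕ, ∃ y, y ∈ ball x (1 / (i + 1)) ∧ ∀ q ∈ F y, η < dist p q := by
    intro i
    rcases h (1 / (i + 1)) (by positivity) with ⟨y, hy, hy2⟩
    exact ⟨y, hy, hy2⟩
  choose y hy1 hy2 using key
  have hyx : Tendsto y atTop (nhds x) := by
    rw [tendsto_iff_dist_tendsto_zero]
    have h1 : Tendsto (fun i : ℕ => 1 / ((i : ℝ) + 1)) atTop (nhds 0) :=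
      tendsto_one_div_add_atTop_nhds_zero_nat
    exact squeeze_zero (fun i => dist_nonneg) (fun i => (mem_ball.1 (hy1 i)).le) h1
  rcases hF x p hp y hyx with ⟨v, hv1, hv2⟩
  have hd0 : Tendsto (fun i => dist p (v i)) atTop (nhds 0) := by
    simpa using
      (tendsto_const_nhds.dist hv2 : Tendsto (fun i => dist p (v i)) atTop (nhds (dist p p)))
  rcases (hd0.eventually (eventually_lt_nhds hη)).exists with ⟨i, hi⟩
  exact absurd (hy2 i (v i) (hv1 i)) (not_lt.2 hi.le)

lemma lsc_ball_aux {F : E' → Set E'} (hF : LowerSemicontinuousSV F)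
    (hcpt : ∀ x, IsCompact (F x))
    (x : E') {η : ℝ} (hη : 0 < η) :
    ∃ r > 0, ∀ y ∈ ball x r, ∀ p ∈ F x, ∃ q ∈ F y, dist p q ≤ η := by
  rcases (hcpt x).finite_cover_balls (half_pos hη) with ⟨t, hts, htf, htc⟩
  have hpt : ∀ p ∈ t, ∃ r > 0, ∀ y ∈ ball x r, ∃ q ∈ F y, dist p q ≤ η / 2 :=
    fun p hp => lsc_pt_aux hF x (hts hp) (half_pos hη)
  choose! r hr0 hr using hpt
  rcases t.eq_empty_or_nonempty with rfl | htne
  · exact ⟨1, one_pos, fun y hy p hp => absurd (htc hp) (by simp)⟩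
  · have htne' : htf.toFinset.Nonempty := by simpa using htne
    refine ⟨htf.toFinset.inf' htne' r, ?_, ?_⟩
    · simp only [gt_iff_lt, Finset.lt_inf'_iff]
      intro p hp; exact hr0 p (by simpa using hp)
    · intro y hy p hp
      rcases mem_iUnion₂.1 (htc hp) with ⟨p₀, hp₀, hpd⟩
      have hy' : y ∈ ball x (r p₀) :=
        ball_subset_ball (htf.toFinset.inf'_le r (by simpa using hp₀)) hy
      rcases hr p₀ hp₀ y hy' with ⟨q, hq, hqd⟩
      refine ⟨q, hq, ?_⟩
      have h1 : dist p p₀ < η / 2 := mem_ball.1 hpd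
      have h2 := dist_triangle p p₀ q
      linarith

end Aux

/-- For a continuous set-valued map with nonempty compact convex values and
every continuous positive `ε`, there is a continuous positive `δ` with
`F(x + δ(x)𝔹) ⊆ F(x) + ε(x)𝔹` for all `x`. -/
theorem stmt12 {n : ℕ} (F : EuclideanSpace ℝ (Fin n) → Set (EuclideanSpace ℝ (Fin n)))
    (hFusc : UpperSemicontinuousSV F) (hFlsc : LowerSemicontinuousSV F)
    (hFne : ∀ x, (F x).Nonempty) (hFcpt : ∀ x, IsCompact (F x)) (hFcvx : ∀ x, Convex ℝ (F x))
    (ε : EuclideanSpace ℝ (Fin n) → ℝ) (hεc : Continuous ε) (hεpos : ∀ x, 0 < ε x) :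
    ∃ δ : EuclideanSpace ℝ (Fin n) → ℝ, Continuous δ ∧ (∀ x, 0 < δ x) ∧
      ∀ x, svImage F (Metric.closedBall x (δ x)) ⊆ F x + Metric.closedBall 0 (ε x) := by
  set T : EuclideanSpace ℝ (Fin n) → Set ℝ := fun x =>
    {r | 0 < r ∧ ∀ z ∈ Metric.closedBall x r, ∀ u ∈ F z, ∃ q ∈ F x, dist u q ≤ ε x} with hT
  have hTcvx : ∀ x, Convex ℝ (T x) := by
    intro x
    have hoc : (T x).OrdConnected := by
      refine ⟨fun a ha b hb c hc => ?_⟩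
      refine ⟨lt_of_lt_of_le ha.1 hc.1, fun z hz u hu => ?_⟩
      exact hb.2 z (closedBall_subset_closedBall hc.2 hz) u hu
    exact hoc.convex
  have hloc : ∀ x, ∃ c : ℝ, ∀ᶠ y in 𝓝 x, c ∈ T y := by
    intro x
    rcases usc_ball_aux hFusc hFne hFcpt x (by have := hεpos x; linarith : (0:ℝ) < ε x / 4) with ⟨r₁, hr₁, h₁⟩
    rcases lsc_ball_aux hFlsc hFcpt x (by have := hεpos x; linarith : (0:ℝ) < ε x / 4) with ⟨r₂, hr₂, h₂⟩
    have h3 : ∀ᶠ y in 𝓝 x, ε y ∈ Metric.ball (ε x) (ε x / 4) :=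
      (hεc.tendsto x) (Metric.ball_mem_nhds (ε x) (by have := hεpos x; linarith))
    rcases Metric.eventually_nhds_iff_ball.1 h3 with ⟨r₃, hr₃, h₃⟩
    set c := min r₁ (min r₂ r₃) / 3 with hc
    have hc0 : 0 < c := div_pos (lt_min hr₁ (lt_min hr₂ hr₃)) (by norm_num)
    refine ⟨c, Metric.eventually_nhds_iff_ball.2 ⟨c, hc0, fun y hy => ?_⟩⟩
    refine ⟨hc0, fun z hz u hu => ?_⟩
    have hcr₁ : c ≤ r₁ / 3 := by
      have : min r₁ (min r₂ r₃) ≤ r₁ := min_le_left _ _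
      simp only [hc]; linarith
    have hcr₂ : c ≤ r₂ / 3 := by
      have : min r₁ (min r₂ r₃) ≤ r₂ := le_trans (min_le_right _ _) (min_le_left _ _)
      simp only [hc]; linarith
    have hcr₃ : c ≤ r₃ / 3 := by
      have : min r₁ (min r₂ r₃) ≤ r₃ := le_trans (min_le_right _ _) (min_le_right _ _)
      simp only [hc]; linarith
    have hyx : dist y x < c := mem_ball.1 hy
    have hzx : z ∈ Metric.ball x r₁ := by
      have hzy : dist z y ≤ c := mem_closedBall.1 hz
      have : dist z x ≤ dist z y + dist y x := dist_triangle z y x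
      exact mem_ball.2 (by linarith)
    rcases h₁ z hzx u hu with ⟨q, hq, hqd⟩
    have hyx₂ : y ∈ Metric.ball x r₂ := mem_ball.2 (by linarith)
    rcases h₂ y hyx₂ q hq with ⟨q', hq', hq'd⟩
    have hεy : ε x / 2 ≤ ε y := by
      have : dist (ε y) (ε x) < ε x / 4 := mem_ball.1 (h₃ y (mem_ball.2 (by linarith)))
      have := abs_sub_lt_iff.1 (by simpa [Real.dist_eq] using this)
      linarith [this.2]
    refine ⟨q', hq', ?_⟩
    have := dist_triangle u q q'
    linarith
  obtain ⟨g, hg⟩ := exists_continuous_forall_mem_convex_of_local_const hTcvx hloc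
  refine ⟨fun x => g x, g.continuous, fun x => (hg x).1, fun x w hw => ?_⟩
  rcases mem_iUnion₂.1 hw with ⟨z, hz, hwz⟩
  rcases (hg x).2 z hz w hwz with ⟨q, hq, hqd⟩
  have : w = q + (w - q) := by abel
  rw [this]
  exact Set.add_mem_add hq (mem_closedBall_zero_iff.2 (by rw [← dist_eq_norm]; exact hqd))
end

section
/- Let K ⊆ ℝⁿ be a closed set and let G : K → Set ℝ be an upper semicontinuous set-valued map such that G(x) is a nonempty, compact, convex subset of (−∞, 0) for every x ∈ K. Then there exists a continuous function g : K → (−∞, 0) such that 0 > g(x) ≥ sup G(x) for every x ∈ K. -/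
open Metric Set Filter MeasureTheory
open scoped Pointwise RealInnerProductSpace Topology

variable {E : Type*} [NormedAddCommGroup E] [NormedSpace ℝ E]

/-!
The function `x ↦ sup G(x)` is upper semicontinuous on `K`, and it lies strictly below the
continuous function `0` because compact values attain their supremum. On the paracompact space
`K`, a continuous function can be inserted strictly between an upper semicontinuous function and
a lower semicontinuous one lying strictly above it: locally a constant fits between them, and a
partition of unity glues these constants because the admissible values at each point form an
interval, which is convex.
-/

theorem UpperHemicontinuousOn.upperSemicontinuousOn_sSup {α β : Type*} [TopologicalSpace α]
    [ConditionallyCompleteLinearOrder β] [TopologicalSpace β] [OrderTopology β]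
    [DenselyOrdered β] {G : α → Set β} {s : Set α} (hG : UpperHemicontinuousOn G s)
    (hne : ∀ x ∈ s, (G x).Nonempty) (hbdd : ∀ x ∈ s, BddAbove (G x)) :
    UpperSemicontinuousOn (fun x => sSup (G x)) s := by
  intro x hx y hy
  obtain ⟨c, hxc, hcy⟩ := exists_between hy
  have hGx : G x ⊆ Iio c := fun a ha => (le_csSup (hbdd x hx) ha).trans_lt hxc
  filter_upwards [hG.forall_isOpen x hx _ isOpen_Iio hGx, self_mem_nhdsWithin] with x' hx' hx's
  exact (csSup_le (hne x' hx's) fun a ha => (hx' ha).le).trans_lt hcy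

theorem exists_continuous_between_of_upperSemicontinuous_of_lowerSemicontinuous
    {X : Type*} [TopologicalSpace X] [NormalSpace X] [ParacompactSpace X] {f h : X → ℝ}
    (hf : UpperSemicontinuous f) (hh : LowerSemicontinuous h) (hfh : ∀ x, f x < h x) :
    ∃ g : C(X, ℝ), ∀ x, f x < g x ∧ g x < h x :=
  exists_continuous_forall_mem_convex_of_local_const (fun x => convex_Ioo (f x) (h x)) fun x =>
    let ⟨c, hfc, hch⟩ := exists_between (hfh x)
    ⟨c, (hf x c hfc).and (hh x c hch)⟩

theorem stmt13_general {n : ℕ} (K : Set (EuclideanSpace ℝ (Fin n)))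
    (G : EuclideanSpace ℝ (Fin n) → Set ℝ)
    (hGusc : ∀ x ∈ K, ∀ U : Set ℝ, IsOpen U → G x ⊆ U → ∀ᶠ y in nhdsWithin x K, G y ⊆ U)
    (hGne : ∀ x ∈ K, (G x).Nonempty) (hGcpt : ∀ x ∈ K, IsCompact (G x))
    (hGneg : ∀ x ∈ K, G x ⊆ Set.Iio 0) :
    ∃ g : EuclideanSpace ℝ (Fin n) → ℝ, ContinuousOn g K ∧
      ∀ x ∈ K, g x < 0 ∧ sSup (G x) ≤ g x := by
  have hsup : UpperSemicontinuousOn (fun x => sSup (G x)) K :=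
    (upperHemicontinuousOn_iff_forall_isOpen.mpr hGusc).upperSemicontinuousOn_sSup hGne
      fun x hx => (hGcpt x hx).bddAbove
  have hsup_neg (x : K) : sSup (G x) < 0 := hGneg x x.2 ((hGcpt x x.2).sSup_mem (hGne x x.2))
  obtain ⟨g, hg⟩ := exists_continuous_between_of_upperSemicontinuous_of_lowerSemicontinuous
    (upperSemicontinuousOn_iff_restrict.mpr hsup) lowerSemicontinuous_const hsup_neg
  have hextend (x : K) : Function.extend Subtype.val g 0 x = g x :=
    Subtype.val_injective.extend_apply _ _ x
  refine ⟨Function.extend Subtype.val g 0, ?_, fun x hx => ?_⟩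
  · rw [continuousOn_iff_continuous_domRestrict]
    convert g.continuous
    exact funext hextend
  · rw [hextend ⟨x, hx⟩]
    exact ⟨(hg ⟨x, hx⟩).2, (hg ⟨x, hx⟩).1.le⟩

/-- An upper semicontinuous map `G` on a closed set `K` with nonempty,
compact, convex values contained in `(-∞, 0)` admits a continuous negative function `g`
on `K` with `0 > g(x) ≥ sup G(x)`. -/
theorem stmt13 {n : ℕ} (K : Set (EuclideanSpace ℝ (Fin n))) (hK : IsClosed K)
    (G : EuclideanSpace ℝ (Fin n) → Set ℝ)
    (hGusc : ∀ x ∈ K, ∀ U : Set ℝ, IsOpen U → G x ⊆ U → ∀ᶠ y in nhdsWithin x K, G y ⊆ U)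
    (hGne : ∀ x ∈ K, (G x).Nonempty) (hGcpt : ∀ x ∈ K, IsCompact (G x))
    (hGcvx : ∀ x ∈ K, Convex ℝ (G x)) (hGneg : ∀ x ∈ K, G x ⊆ Set.Iio 0) :
    ∃ g : EuclideanSpace ℝ (Fin n) → ℝ, ContinuousOn g K ∧
      ∀ x ∈ K, g x < 0 ∧ sSup (G x) ≤ g x :=
  stmt13_general K G hGusc hGne hGcpt hGneg
end

section
/- Let β : [0,∞) × [0,∞) → [0,∞) be a continuous function that is nondecreasing in each argument separately and satisfies β(r, 0) = 0 and β(0, δ) = 0 for all r, δ ≥ 0. Then there exists a continuous nondecreasing function α : [0,∞) → [0,∞) with α(0) = 0 such that β(r, δ) ≤ α(r)·α(δ) for all r, δ ≥ 0. -/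
open Metric Set Filter MeasureTheory
open scoped Pointwise RealInnerProductSpace Topology

variable {E : Type*} [NormedAddCommGroup E] [NormedSpace ℝ E]

/-- A continuous `β : [0,∞)² → [0,∞)`, nondecreasing in each argument and
vanishing when either argument is `0`, is dominated by a product `α(r)·α(δ)` with `α`
continuous, nondecreasing, and `α(0) = 0`. -/
theorem stmt14 (β : ℝ → ℝ → ℝ)
    (hcont : ContinuousOn (fun p : ℝ × ℝ => β p.1 p.2) (Set.Ici 0 ×ˢ Set.Ici 0))
    (hnn : ∀ r ≥ (0:ℝ), ∀ δ ≥ (0:ℝ), 0 ≤ β r δ)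
    (hmono1 : ∀ δ ≥ (0:ℝ), MonotoneOn (fun r => β r δ) (Set.Ici 0))
    (hmono2 : ∀ r ≥ (0:ℝ), MonotoneOn (fun δ => β r δ) (Set.Ici 0))
    (hr0 : ∀ r ≥ (0:ℝ), β r 0 = 0) (h0δ : ∀ δ ≥ (0:ℝ), β 0 δ = 0) :
    ∃ α : ℝ → ℝ, ContinuousOn α (Set.Ici 0) ∧ MonotoneOn α (Set.Ici 0) ∧
      α 0 = 0 ∧ (∀ s ≥ (0:ℝ), 0 ≤ α s) ∧
      ∀ r ≥ (0:ℝ), ∀ δ ≥ (0:ℝ), β r δ ≤ α r * α δ := by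
    classical
  -- Symmetrized, clamped version of β, defined and continuous on all of ℝ².
  set B : ℝ → ℝ → ℝ := fun r δ => β (max r 0) (max δ 0) + β (max δ 0) (max r 0) with hBdef
  have hmax : ∀ x : ℝ, max x 0 ∈ Set.Ici (0:ℝ) := fun x => le_max_right x 0
  have hc1 : Continuous fun p : ℝ × ℝ => β (max p.1 0) (max p.2 0) := by
    have hmap : Continuous fun p : ℝ × ℝ => ((max p.1 0, max p.2 0) : ℝ × ℝ) :=
      (continuous_fst.max continuous_const).prodMk (continuous_snd.max continuous_const)
    exact hcont.comp_continuous hmap (fun p => ⟨hmax p.1, hmax p.2⟩)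
  have hBc : Continuous fun p : ℝ × ℝ => B p.1 p.2 := by
    have hc2 : Continuous fun p : ℝ × ℝ => β (max p.2 0) (max p.1 0) :=
      hc1.comp continuous_swap
    exact hc1.add hc2
  have hBnn : ∀ r δ, 0 ≤ B r δ := by
    intro r δ
    exact add_nonneg (hnn _ (hmax r) _ (hmax δ)) (hnn _ (hmax δ) _ (hmax r))
  have hBsymm : ∀ r δ, B r δ = B δ r := by
    intro r δ; simp only [hBdef]; ring
  have hBm1 : ∀ δ, ∀ a b : ℝ, a ≤ b → B a δ ≤ B b δ := by
    intro δ a b hab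
    have h1 : β (max a 0) (max δ 0) ≤ β (max b 0) (max δ 0) :=
      hmono1 _ (hmax δ) (hmax a) (hmax b) (max_le_max hab le_rfl)
    have h2 : β (max δ 0) (max a 0) ≤ β (max δ 0) (max b 0) :=
      hmono2 _ (hmax δ) (hmax a) (hmax b) (max_le_max hab le_rfl)
    exact add_le_add h1 h2
  have hBm2 : ∀ r, ∀ a b : ℝ, a ≤ b → B r a ≤ B r b := by
    intro r a b hab
    rw [hBsymm r a, hBsymm r b]; exact hBm1 r a b hab
  have hB0 : ∀ s : ℝ, B 0 s = 0 := by
    intro s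
    simp only [hBdef, max_self, max_eq_right (le_refl (0:ℝ))]
    rw [hr0 _ (hmax s), h0δ _ (hmax s)]; ring
  have hβB : ∀ r ≥ (0:ℝ), ∀ δ ≥ (0:ℝ), β r δ ≤ B r δ := by
    intro r hr δ hδ
    simp only [hBdef, max_eq_left hr, max_eq_left hδ]
    exact le_add_of_nonneg_right (hnn _ hδ _ hr)
  -- continuity of slices
  have hslice : ∀ c : ℝ, Continuous fun s : ℝ => B s c := fun c =>
    hBc.comp (continuous_id.prodMk continuous_const)
  have hdiag : Continuous fun s : ℝ => B (s+1) (s+1) :=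
    hBc.comp ((continuous_id.add continuous_const).prodMk
      (continuous_id.add continuous_const))
  -- the three building blocks
  set γ : ℝ → ℝ := fun s => Real.sqrt (B s 1) with hγdef
  set f : ℕ → ℝ → ℝ := fun n m => Real.exp (-(n:ℝ)) * min (B m n) 1 with hfdef
  set A1 : ℝ → ℝ := fun m => ∑' n, f n m with hA1def
  set A2 : ℝ → ℝ := fun M => Real.exp (M+1) * (1 + B (M+1) (M+1)) with hA2def
  have hwsum : Summable fun n : ℕ => Real.exp (-(n:ℝ)) := by
    have : ∀ n : ℕ, Real.exp (-(n:ℝ)) = (Real.exp (-1)) ^ n := by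
      intro n
      rw [← Real.exp_nat_mul]
      ring_nf
    simp only [this]
    exact summable_geometric_of_lt_one (le_of_lt (Real.exp_pos _))
      (Real.exp_lt_one_iff.mpr (by norm_num))
  have hfnn : ∀ n m, 0 ≤ f n m := by
    intro n m
    exact mul_nonneg (le_of_lt (Real.exp_pos _)) (le_min (hBnn m n) zero_le_one)
  have hfle : ∀ n m, f n m ≤ Real.exp (-(n:ℝ)) := by
    intro n m
    exact mul_le_of_le_one_right (le_of_lt (Real.exp_pos _)) (min_le_right _ _)
  have hsum : ∀ m, Summable fun n => f n m := fun m =>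
    Summable.of_nonneg_of_le (fun n => hfnn n m) (fun n => hfle n m) hwsum
  have hA1nn : ∀ m, 0 ≤ A1 m := fun m => tsum_nonneg (fun n => hfnn n m)
  have hA1mono : Monotone A1 := by
    intro a b hab
    refine Summable.tsum_le_tsum (fun n => ?_) (hsum a) (hsum b)
    exact mul_le_mul_of_nonneg_left
      (min_le_min (hBm1 _ a b hab) le_rfl) (le_of_lt (Real.exp_pos _))
  have hA1c : Continuous A1 := by
    refine continuous_tsum (fun n => ?_) hwsum (fun n x => ?_)
    · exact continuous_const.mul ((hslice _).min continuous_const)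
    · rw [Real.norm_eq_abs, abs_of_nonneg (hfnn n x)]
      exact hfle n x
  have hA10 : A1 0 = 0 := by
    have : ∀ n : ℕ, f n 0 = 0 := by
      intro n
      simp only [hfdef, hB0]
      rw [min_eq_left zero_le_one, mul_zero]
    simp only [hA1def, this, tsum_zero]
  have hA1ge : ∀ n m, f n m ≤ A1 m := fun n m =>
    Summable.le_tsum (hsum m) n (fun j _ => hfnn j m)
  have hA2nn : ∀ M, 0 ≤ A2 M := fun M =>
    mul_nonneg (le_of_lt (Real.exp_pos _))
      (add_nonneg zero_le_one (hBnn _ _))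
  have hA2mono : Monotone A2 := by
    intro a b hab
    refine mul_le_mul (Real.exp_le_exp.mpr (by linarith)) ?_
      (add_nonneg zero_le_one (hBnn _ _)) (le_of_lt (Real.exp_pos _))
    have h1 : B (a+1) (a+1) ≤ B (b+1) (a+1) := hBm1 _ _ _ (by linarith)
    have h2 : B (b+1) (a+1) ≤ B (b+1) (b+1) := hBm2 _ _ _ (by linarith)
    linarith
  have hA2c : Continuous A2 := by
    exact (Real.continuous_exp.comp (continuous_id.add continuous_const)).mul
      (continuous_const.add hdiag)
  have hγnn : ∀ s, 0 ≤ γ s := fun s => Real.sqrt_nonneg _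
  have hγmono : Monotone γ := fun a b hab => Real.sqrt_le_sqrt (hBm1 1 a b hab)
  have hγc : Continuous γ := Real.continuous_sqrt.comp (hslice 1)
  -- the dominating function
  set α : ℝ → ℝ := fun s => γ s + A1 s + min s 1 * A2 s with hαdef
  have hαnn : ∀ s, 0 ≤ s → 0 ≤ α s := by
    intro s hs
    have : 0 ≤ min s 1 := le_min hs zero_le_one
    exact add_nonneg (add_nonneg (hγnn s) (hA1nn s)) (mul_nonneg this (hA2nn s))
  have hγle : ∀ s, 0 ≤ s → γ s ≤ α s := by
    intro s hs
    have h1 : 0 ≤ min s 1 := le_min hs zero_le_one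
    have := mul_nonneg h1 (hA2nn s)
    simp only [hαdef]
    linarith [hA1nn s]
  have hA1le : ∀ s, 0 ≤ s → A1 s ≤ α s := by
    intro s hs
    have h1 : 0 ≤ min s 1 := le_min hs zero_le_one
    have := mul_nonneg h1 (hA2nn s)
    simp only [hαdef]
    linarith [hγnn s]
  have hlastle : ∀ s, min s 1 * A2 s ≤ α s := by
    intro s
    simp only [hαdef]
    linarith [hγnn s, hA1nn s]
  -- key inequality
  have hkey : ∀ m M : ℝ, 0 ≤ m → m ≤ M → B m M ≤ α m * α M := by
    intro m M hm hmM
    have hM : 0 ≤ M := le_trans hm hmM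
    rcases le_total M 1 with hM1 | hM1
    · -- small scale: use γ
      have h1 : B m M ≤ B m 1 := hBm2 m M 1 hM1
      have h2 : B m M ≤ B M 1 := le_trans (hBm1 M m M hmM) (hBm2 M M 1 hM1)
      have hsq : B m M * B m M ≤ B m 1 * B M 1 :=
        mul_le_mul h1 h2 (hBnn m M) (le_trans (hBnn m M) h1)
      have h3 : B m M ≤ γ m * γ M := by
        have := Real.sqrt_le_sqrt hsq
        rwa [Real.sqrt_mul_self (hBnn m M),
          Real.sqrt_mul (hBnn m 1) (B M 1)] at this
      refine le_trans h3 (mul_le_mul (hγle m hm) (hγle M hM) (hγnn M) (hαnn m hm))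
    · -- large scale: use A1 · A2
      set n : ℕ := ⌈M⌉₊ with hndef
      have hMn : M ≤ (n:ℝ) := Nat.le_ceil M
      have hn1 : (n:ℝ) ≤ M + 1 := le_of_lt (Nat.ceil_lt_add_one hM)
      have hstep : B m M ≤ min (B m (n:ℝ)) 1 * (1 + B (M+1) (M+1)) := by
        have hBmn : B m M ≤ B m (n:ℝ) := hBm2 m M _ hMn
        rcases le_total (B m (n:ℝ)) 1 with hc | hc
        · rw [min_eq_left hc]
          calc B m M ≤ B m (n:ℝ) := hBmn
            _ = B m (n:ℝ) * 1 := (mul_one _).symm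
            _ ≤ B m (n:ℝ) * (1 + B (M+1) (M+1)) :=
                mul_le_mul_of_nonneg_left (by linarith [hBnn (M+1) (M+1)]) (hBnn m _)
        · rw [min_eq_right hc]
          have h4 : B m (n:ℝ) ≤ B (M+1) (n:ℝ) := hBm1 _ m (M+1) (by linarith)
          have h5 : B (M+1) (n:ℝ) ≤ B (M+1) (M+1) := hBm2 _ _ _ hn1
          calc B m M ≤ B m (n:ℝ) := hBmn
            _ ≤ B (M+1) (M+1) := le_trans h4 h5
            _ ≤ 1 * (1 + B (M+1) (M+1)) := by linarith
      have hmin : min (B m (n:ℝ)) 1 = Real.exp (n:ℝ) * f n m := by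
        simp only [hfdef]
        rw [← mul_assoc, ← Real.exp_add]
        simp
      have hexp : Real.exp (n:ℝ) ≤ Real.exp (M+1) := Real.exp_le_exp.mpr hn1
      have hBMnn : (0:ℝ) ≤ 1 + B (M+1) (M+1) := by linarith [hBnn (M+1) (M+1)]
      have hstep2 : B m M ≤ A1 m * A2 M := by
        calc B m M ≤ min (B m (n:ℝ)) 1 * (1 + B (M+1) (M+1)) := hstep
          _ = Real.exp (n:ℝ) * f n m * (1 + B (M+1) (M+1)) := by rw [hmin]
          _ ≤ Real.exp (M+1) * A1 m * (1 + B (M+1) (M+1)) := by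
              refine mul_le_mul_of_nonneg_right ?_ hBMnn
              exact mul_le_mul hexp (hA1ge n m) (hfnn n m) (le_of_lt (Real.exp_pos _))
          _ = A1 m * A2 M := by simp only [hA2def]; ring
      have hminM : min M 1 = 1 := min_eq_right hM1
      calc B m M ≤ A1 m * A2 M := hstep2
        _ = A1 m * (min M 1 * A2 M) := by rw [hminM, one_mul]
        _ ≤ α m * α M :=
            mul_le_mul (hA1le m hm) (hlastle M)
              (mul_nonneg (le_min hM zero_le_one) (hA2nn M)) (hαnn m hm)
  refine ⟨α, ?_, ?_, ?_, ?_, ?_⟩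
  · exact (((hγc.add hA1c).add
      (((continuous_id.min continuous_const)).mul hA2c)).continuousOn)
  · intro a ha b hb hab
    simp only [hαdef]
    have h1 : min a 1 * A2 a ≤ min b 1 * A2 b :=
      mul_le_mul (min_le_min hab le_rfl) (hA2mono hab) (hA2nn a)
        (le_min (le_trans ha hab) zero_le_one)
    have h2 := hγmono hab
    have h3 := hA1mono hab
    linarith
  · simp only [hαdef, hγdef, hB0, Real.sqrt_zero, hA10]
    rw [min_eq_left zero_le_one]
    ring
  · exact fun s hs => hαnn s hs
  · intro r hr δ hδ
    rcases le_total r δ with h | h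
    · exact le_trans (hβB r hr δ hδ) (hkey r δ hr h)
    · refine le_trans (hβB r hr δ hδ) ?_
      rw [hBsymm r δ, mul_comm]
      exact hkey δ r hδ h
end
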